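/- arXiv:2004.02712 — 4 statements merged into one kernel-verified Lean document; each statement's English description precedes it below -/
import Mathlib

section
/- (Theorem 1, radial form.) For every real α > 0, the supremum V_{k,N,α} = sup{∫_0^1 r^{N−1}|v(r)|^{k*+r^α} dr : v ∈ X_1, ‖v‖_{X_1} = 1} is finite. (Via the identities ∫_B |u|^{k*+|x|^α} dx = ω_{N−1}∫_0^1 r^{N−1}|v|^{k*+r^α} dr and ‖u‖_{Φ^k_0} = ‖v‖_{X_1} for radially symmetric u(x) = −v(|x|), this is the supercritical Sobolev-type inequality for radially symmetric k-admissible functions on the unit ball.) -/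
open MeasureTheory Real Set Filter Asymptotics

/-- `k* = N(k+1)/(N-2k)`, the critical exponent for the `k`-Hessian operator. -/
noncomputable def kstar (N k : ℕ) : ℝ :=
  ((N : ℝ) * ((k : ℝ) + 1)) / ((N : ℝ) - 2 * (k : ℝ))

/-- `ω_{N-1} = 2 π^{N/2} / Γ(N/2)`, the surface area of the unit sphere in `ℝ^N`. -/
noncomputable def omegaSphere (N : ℕ) : ℝ :=
  2 * Real.pi ^ ((N : ℝ) / 2) / Real.Gamma ((N : ℝ) / 2)

/-- `ω_{N,k} = ω_{N-1} * C(N,k) / N`. -/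
noncomputable def omegaNk (N k : ℕ) : ℝ :=
  omegaSphere N * (N.choose k : ℝ) / (N : ℝ)

/-- Membership in the weighted Sobolev space `X_1`: `v` is locally absolutely
continuous on `(0,1)` (expressed via the fundamental theorem of calculus for its
a.e. derivative `deriv v`), tends to `0` at `1⁻` (with value `0` at `1`), and the
weighted integrals of `|v'|^{k+1}` and `|v|^{k+1}` are finite. -/
structure MemX1 (N k : ℕ) (v : ℝ → ℝ) : Prop where
  ftc : ∀ a ∈ Set.Ioo (0:ℝ) 1, ∀ b ∈ Set.Ioo (0:ℝ) 1,
    IntervalIntegrable (deriv v) MeasureTheory.volume a b ∧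
      v b - v a = ∫ s in a..b, deriv v s
  lim_one : Filter.Tendsto v (nhdsWithin 1 (Set.Iio 1)) (nhds 0)
  val_one : v 1 = 0
  int_deriv : MeasureTheory.IntegrableOn
    (fun r : ℝ => r ^ ((N : ℝ) - (k : ℝ)) * |deriv v r| ^ ((k : ℝ) + 1)) (Set.Ioo 0 1)
  int_self : MeasureTheory.IntegrableOn
    (fun r : ℝ => r ^ ((N : ℝ) - 1) * |v r| ^ ((k : ℝ) + 1)) (Set.Ioo 0 1)

/-- The norm of `X_1`: `‖v‖ = (ω_{N,k} ∫_0^1 r^{N-k} |v'|^{k+1} dr)^{1/(k+1)}`. -/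
noncomputable def X1norm (N k : ℕ) (v : ℝ → ℝ) : ℝ :=
  (omegaNk N k * ∫ r in Set.Ioo (0:ℝ) 1,
      r ^ ((N : ℝ) - (k : ℝ)) * |deriv v r| ^ ((k : ℝ) + 1)) ^ (1 / ((k : ℝ) + 1))

/-- The supercritical functional `∫_0^1 r^{N-1} |v|^{k* + r^α} dr`. -/
noncomputable def superInt (N k : ℕ) (α : ℝ) (v : ℝ → ℝ) : ℝ :=
  ∫ r in Set.Ioo (0:ℝ) 1, r ^ ((N : ℝ) - 1) * |v r| ^ (kstar N k + r ^ α)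

/-- `V_{k,N,α}`, the supremum of the supercritical functional on the unit sphere of `X_1`. -/
noncomputable def Vsup (N k : ℕ) (α : ℝ) : ℝ :=
  sSup ((fun v => superInt N k α v) '' {v : ℝ → ℝ | MemX1 N k v ∧ X1norm N k v = 1})

/-- The critical functional `∫_0^1 r^{N-1} |v|^{k*} dr`. -/
noncomputable def critInt (N k : ℕ) (v : ℝ → ℝ) : ℝ :=
  ∫ r in Set.Ioo (0:ℝ) 1, r ^ ((N : ℝ) - 1) * |v r| ^ (kstar N k)

/-- `V_{k,N}`, the supremum of the critical functional on the unit sphere of `X_1`. -/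
noncomputable def VkN (N k : ℕ) : ℝ :=
  sSup ((fun v => critInt N k v) '' {v : ℝ → ℝ | MemX1 N k v ∧ X1norm N k v = 1})

/-- The normalizing constant `ĉ = (N ((N-2k)/k)^k)^{(N-2k)/(2k)}`. -/
noncomputable def chat (N k : ℕ) : ℝ :=
  ((N : ℝ) * (((N : ℝ) - 2 * (k : ℝ)) / (k : ℝ)) ^ k) ^ (((N : ℝ) - 2 * (k : ℝ)) / (2 * (k : ℝ)))

/-- The instanton `v*_ε(r) = ĉ (ε^{2/(k+1)} / (ε² + r²))^{(N-2k)/(2k)}`. -/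
noncomputable def vstar (N k : ℕ) (ε r : ℝ) : ℝ :=
  chat N k * (ε ^ ((2 : ℝ) / ((k : ℝ) + 1)) / (ε ^ 2 + r ^ 2)) ^
    (((N : ℝ) - 2 * (k : ℝ)) / (2 * (k : ℝ)))

/-- `K = ∫_0^∞ r^{N-1} (v*_1(r))^{k*} dr = S^{N/(2k)}`. -/
noncomputable def Kconst (N k : ℕ) : ℝ :=
  ∫ r in Set.Ioi (0:ℝ), r ^ ((N : ℝ) - 1) * vstar N k 1 r ^ kstar N k


/-!
Write `φ = |v'|`. Since `v(1⁻) = 0`, `|v(r)| ≤ ∫_r^1 φ`, and Hölder's inequality against the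
weight `s^δ`, for any `δ > k`, gives
`|v(r)|^(k+1) ≤ (k/(δ-k))^k r^(k-δ) ∫_r^1 s^δ φ^(k+1)`.
For `δ = N - k` the last integral is at most the energy `∫_0^1 s^(N-k) φ^(k+1) = 1/ω_{N,k}`,
which yields the radial decay `|v(r)| ≤ A r^(-β)` with `β = (N-2k)/(k+1)`.

Split `|v|^(k*+r^α) = |v|^(k+1) |v|^(k*-k-1+r^α)`. As `β (k*-k-1) = 2k`, the decay bounds the second
factor by `C r^(-2k) r^(-β r^α)`, and `r^(-β r^α) ≤ e^(β/α)` because `r^α log(1/r) ≤ 1/α`.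
Bounding the first factor with `δ = k + 1/2` shows that the integrand is at most
`D r^(N-2k-3/2) ∫_r^1 s^(k+1/2) φ^(k+1)`; exchanging the order of integration turns the integral of
this bound into `D/(N-2k-1/2)` times the energy.
-/

open scoped ENNReal Topology

theorem lintegral_Ioo_rpow_le_of_lt_neg_one {e r : ℝ} (b : ℝ) (he : e < -1) (hr : 0 < r) :
    ∫⁻ s in Ioo r b, ENNReal.ofReal (s ^ e) ≤ ENNReal.ofReal (-r ^ (e + 1) / (e + 1)) := by
  calc ∫⁻ s in Ioo r b, ENNReal.ofReal (s ^ e)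
      ≤ ∫⁻ s in Ioi r, ENNReal.ofReal (s ^ e) := lintegral_mono_set Ioo_subset_Ioi_self
    _ = ENNReal.ofReal (-r ^ (e + 1) / (e + 1)) := by
      rw [← integral_Ioi_rpow_of_lt he hr, ofReal_integral_eq_lintegral_ofReal
        (integrableOn_Ioi_rpow_of_lt he hr)]
      filter_upwards [ae_restrict_mem measurableSet_Ioi] with s hs
      exact rpow_nonneg (hr.trans hs).le e

theorem lintegral_Ioo_zero_rpow {e s : ℝ} (he : -1 < e) (hs : 0 ≤ s) :
    ∫⁻ r in Ioo 0 s, ENNReal.ofReal (r ^ e) = ENNReal.ofReal (s ^ (e + 1) / (e + 1)) := by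
  have hint : IntegrableOn (fun r : ℝ => r ^ e) (Ioc 0 s) :=
    (intervalIntegrable_iff_integrableOn_Ioc_of_le hs).1
      (intervalIntegral.intervalIntegrable_rpow' he)
  rw [← ofReal_integral_eq_lintegral_ofReal (hint.mono_set Ioo_subset_Ioc_self),
    ← integral_Ioc_eq_integral_Ioo, ← intervalIntegral.integral_of_le hs,
    integral_rpow (Or.inl he), zero_rpow (by linarith), sub_zero]
  filter_upwards [ae_restrict_mem measurableSet_Ioo] with r hr
  exact rpow_nonneg hr.1.le e

theorem lintegral_le_weighted_Lp_mul_Lq {μ : Measure ℝ} (hμ : ∀ᵐ s ∂μ, 0 < s) {k : ℝ}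
    (hk : 0 < k) (δ : ℝ) {φ : ℝ → ℝ≥0∞} (hφ : AEMeasurable φ μ) :
    ∫⁻ s, φ s ∂μ ≤
      (∫⁻ s, ENNReal.ofReal (s ^ δ) * φ s ^ (k + 1) ∂μ) ^ (1 / (k + 1)) *
        (∫⁻ s, ENNReal.ofReal (s ^ (-(δ / k))) ∂μ) ^ (k / (k + 1)) := by
  have hpq : (k + 1).HolderConjugate ((k + 1) / k) := by
    rw [Real.holderConjugate_iff]
    constructor
    · linarith
    · field_simp; ring
  have hmeas : ∀ γ : ℝ, AEMeasurable (fun s : ℝ => ENNReal.ofReal (s ^ γ)) μ := fun γ =>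
    (measurable_id.pow_const γ).ennreal_ofReal.aemeasurable
  calc ∫⁻ s, φ s ∂μ
      = ∫⁻ s, ENNReal.ofReal (s ^ (δ / (k + 1))) * φ s *
          ENNReal.ofReal (s ^ (-(δ / (k + 1)))) ∂μ :=
        lintegral_congr_ae <| hμ.mono fun s hs => by
          dsimp only
          rw [mul_right_comm, ← ENNReal.ofReal_mul (rpow_nonneg hs.le _), ← rpow_add hs,
            add_neg_cancel, rpow_zero, ENNReal.ofReal_one, one_mul]
    _ ≤ _ := ENNReal.lintegral_mul_le_Lp_mul_Lq μ hpq ((hmeas _).mul hφ) (hmeas _)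
    _ = _ := by
      rw [one_div_div]
      congr 2 <;> refine lintegral_congr_ae (hμ.mono fun s hs => ?_) <;> dsimp only
      · rw [ENNReal.mul_rpow_of_nonneg _ _ (by linarith),
          ENNReal.ofReal_rpow_of_nonneg (rpow_nonneg hs.le _) (by linarith), ← rpow_mul hs.le,
          div_mul_cancel₀ _ (by linarith)]
      · rw [ENNReal.ofReal_rpow_of_nonneg (rpow_nonneg hs.le _) (by positivity),
          ← rpow_mul hs.le]
        congr 2
        field_simp

theorem rpow_lintegral_Ioo_le_mul_weighted {k δ r : ℝ} (b : ℝ) (hk : 0 < k) (hδ : k < δ)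
    (hr : 0 < r) {φ : ℝ → ℝ≥0∞} (hφ : Measurable φ) :
    (∫⁻ s in Ioo r b, φ s) ^ (k + 1) ≤ ENNReal.ofReal ((k / (δ - k)) ^ k * r ^ (k - δ)) *
      ∫⁻ s in Ioo r b, ENNReal.ofReal (s ^ δ) * φ s ^ (k + 1) := by
  have hδk : 0 < δ - k := sub_pos.2 hδ
  have hμ : ∀ᵐ s ∂(volume.restrict (Ioo r b)), 0 < s :=
    (ae_restrict_mem measurableSet_Ioo).mono fun s hs => hr.trans hs.1
  have hweight : ∫⁻ s in Ioo r b, ENNReal.ofReal (s ^ (-(δ / k)))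
      ≤ ENNReal.ofReal (k / (δ - k) * r ^ ((k - δ) / k)) := by
    refine (lintegral_Ioo_rpow_le_of_lt_neg_one b ?_ hr).trans_eq ?_
    · rw [neg_lt_neg_iff, one_lt_div hk]
      exact hδ
    · have : k - δ ≠ 0 := (sub_neg.2 hδ).ne
      rw [show -(δ / k) + 1 = (k - δ) / k by field_simp; ring]
      congr 1
      field_simp
      ring
  calc (∫⁻ s in Ioo r b, φ s) ^ (k + 1)
      ≤ ((∫⁻ s in Ioo r b, ENNReal.ofReal (s ^ δ) * φ s ^ (k + 1)) ^ (1 / (k + 1)) *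
          (ENNReal.ofReal (k / (δ - k) * r ^ ((k - δ) / k))) ^ (k / (k + 1))) ^ (k + 1) := by
        gcongr
        refine (lintegral_le_weighted_Lp_mul_Lq hμ hk δ hφ.aemeasurable).trans ?_
        gcongr
    _ = _ := by
        rw [ENNReal.mul_rpow_of_nonneg _ _ (by linarith), ← ENNReal.rpow_mul, ← ENNReal.rpow_mul,
          one_div_mul_cancel (by linarith), ENNReal.rpow_one, div_mul_cancel₀ _ (by linarith),
          mul_comm, ENNReal.ofReal_rpow_of_nonneg (by positivity) hk.le,
          mul_rpow (div_nonneg hk.le hδk.le) (by positivity), ← rpow_mul hr.le,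
          div_mul_cancel₀ _ hk.ne']

theorem lintegral_Ioo_rpow_mul_lintegral_Ioo {γ : ℝ} (hγ : -1 < γ) (b : ℝ)
    {W : ℝ → ℝ≥0∞} (hW : Measurable W) :
    ∫⁻ r in Ioo 0 b, ENNReal.ofReal (r ^ γ) * ∫⁻ s in Ioo r b, W s =
      ∫⁻ s in Ioo 0 b, ENNReal.ofReal (s ^ (γ + 1) / (γ + 1)) * W s := by
  set F : ℝ → ℝ → ℝ≥0∞ := fun r s => ENNReal.ofReal (r ^ γ) * (Ioi r).indicator W s
  have hF : Measurable (Function.uncurry F) :=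
    (measurable_fst.pow_const γ).ennreal_ofReal.mul
      ((hW.comp measurable_snd).indicator (measurableSet_lt measurable_fst measurable_snd))
  calc ∫⁻ r in Ioo 0 b, ENNReal.ofReal (r ^ γ) * ∫⁻ s in Ioo r b, W s
      = ∫⁻ r in Ioo 0 b, ∫⁻ s in Ioo 0 b, F r s := by
        refine setLIntegral_congr_fun measurableSet_Ioo fun r hr => ?_
        rw [lintegral_const_mul' _ _ ENNReal.ofReal_ne_top, lintegral_indicator measurableSet_Ioi,
          Measure.restrict_restrict measurableSet_Ioi, Ioi_inter_Ioo, max_eq_left hr.1.le]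
    _ = ∫⁻ s in Ioo 0 b, ∫⁻ r in Ioo 0 b, F r s := lintegral_lintegral_swap hF.aemeasurable
    _ = ∫⁻ s in Ioo 0 b, ENNReal.ofReal (s ^ (γ + 1) / (γ + 1)) * W s := by
        refine setLIntegral_congr_fun measurableSet_Ioo fun s hs => ?_
        have hFs : ∀ r, F r s = (Iio s).indicator (fun r => ENNReal.ofReal (r ^ γ)) r * W s := by
          intro r
          by_cases hrs : r < s <;> simp [F, indicator, hrs]
        simp_rw [hFs]
        rw [lintegral_mul_const _ (Measurable.indicator (by fun_prop) measurableSet_Iio),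
          lintegral_indicator measurableSet_Iio, Measure.restrict_restrict measurableSet_Iio,
          Iio_inter_Ioo, min_eq_left hs.2.le, lintegral_Ioo_zero_rpow hγ hs.1.le]

theorem rpow_neg_mul_rpow_le_exp {r β α : ℝ} (hr : 0 < r) (hβ : 0 ≤ β) (hα : 0 < α) :
    r ^ (-(β * r ^ α)) ≤ exp (β / α) := by
  have hrα : 0 < r ^ α := rpow_pos_of_pos hr α
  have hlog : -log r * r ^ α ≤ 1 / α := by
    have h := log_le_rpow_div (inv_nonneg.2 hr.le) hα
    rw [log_inv, inv_rpow hr.le] at h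
    calc -log r * r ^ α ≤ (r ^ α)⁻¹ / α * r ^ α := by gcongr
      _ = 1 / α := by field_simp
  rw [rpow_def_of_pos hr, exp_le_exp, div_eq_mul_one_div β α]
  linarith [mul_le_mul_of_nonneg_left hlog hβ]

theorem rpow_add_rpow_le_of_le_mul_rpow_neg {a A β σ α r : ℝ} (ha : 0 ≤ a)
    (haA : a ≤ A * r ^ (-β)) (hr0 : 0 < r) (hr1 : r ≤ 1) (hβ : 0 ≤ β) (hσ : 0 ≤ σ)
    (hα : 0 < α) :
    a ^ (σ + r ^ α) ≤ max A 1 ^ (σ + 1) * exp (β / α) * r ^ (-(β * σ)) := by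
  have hrα : 0 < r ^ α := rpow_pos_of_pos hr0 α
  have hrα1 : r ^ α ≤ 1 := rpow_le_one hr0.le hr1 hα.le
  have hA : 0 ≤ A := nonneg_of_mul_nonneg_left (ha.trans haA) (rpow_pos_of_pos hr0 _)
  calc a ^ (σ + r ^ α) ≤ (A * r ^ (-β)) ^ (σ + r ^ α) := by gcongr
    _ = A ^ (σ + r ^ α) * (r ^ (-(β * r ^ α)) * r ^ (-(β * σ))) := by
        rw [mul_rpow hA (rpow_nonneg hr0.le _), ← rpow_mul hr0.le, ← rpow_add hr0]
        ring_nf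
    _ ≤ max A 1 ^ (σ + 1) * (exp (β / α) * r ^ (-(β * σ))) := by
        gcongr
        · calc A ^ (σ + r ^ α) ≤ max A 1 ^ (σ + r ^ α) := by gcongr; exact le_max_left A 1
            _ ≤ max A 1 ^ (σ + 1) := rpow_le_rpow_of_exponent_le (le_max_right A 1) (by linarith)
        · exact rpow_neg_mul_rpow_le_exp hr0 hβ hα
    _ = _ := by ring

theorem omegaNk_nonneg (N k : ℕ) : 0 ≤ omegaNk N k := by
  unfold omegaNk omegaSphere
  positivity

theorem div_mul_kstar_sub_eq {N k : ℕ} (hN : 2 * k < N) :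
    ((N : ℝ) - 2 * k) / (k + 1) * (kstar N k - (k + 1)) = 2 * k := by
  have : (N : ℝ) - 2 * k ≠ 0 := (sub_pos.2 (by exact_mod_cast hN)).ne'
  unfold kstar
  field_simp
  ring

theorem add_one_le_kstar {N k : ℕ} (hN : 2 * k < N) : (k : ℝ) + 1 ≤ kstar N k := by
  have hβ : 0 < ((N : ℝ) - 2 * k) / (k + 1) :=
    div_pos (sub_pos.2 (by exact_mod_cast hN)) (by positivity)
  exact sub_nonneg.1 (nonneg_of_mul_nonneg_right (by rw [div_mul_kstar_sub_eq hN]; positivity) hβ)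

noncomputable def decayConst (N k : ℕ) : ℝ :=
  (((k : ℝ) / (N - 2 * k)) ^ (k : ℝ) / omegaNk N k) ^ (1 / ((k : ℝ) + 1))

noncomputable def excessConst (N k : ℕ) (α : ℝ) : ℝ :=
  max (decayConst N k) 1 ^ (kstar N k - k) * exp (((N : ℝ) - 2 * k) / (k + 1) / α)

theorem excessConst_pos (N k : ℕ) (α : ℝ) : 0 < excessConst N k α :=
  mul_pos (rpow_pos_of_pos (lt_max_of_lt_right one_pos) _) (exp_pos _)

noncomputable def superBound (N k : ℕ) (α : ℝ) : ℝ :=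
  excessConst N k α * (2 * k) ^ (k : ℝ) / (((N : ℝ) - 2 * k - 1 / 2) * omegaNk N k)

namespace MemX1

variable {N k : ℕ} {v : ℝ → ℝ}

theorem abs_le_lintegral_deriv (hv : MemX1 N k v) {r : ℝ} (hr : r ∈ Ioo 0 1) :
    ENNReal.ofReal |v r| ≤ ∫⁻ s in Ioo r 1, ENNReal.ofReal |deriv v s| := by
  have hincr : ∀ b ∈ Ioo r 1,
      ENNReal.ofReal |v b - v r| ≤ ∫⁻ s in Ioo r 1, ENNReal.ofReal |deriv v s| := by
    intro b hb
    rw [(hv.ftc r hr b ⟨hr.1.trans hb.1, hb.2⟩).2, intervalIntegral.integral_of_le hb.1.le,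
      integral_Ioc_eq_integral_Ioo, ← enorm_eq_ofReal_abs]
    refine (enorm_integral_le_lintegral_enorm _).trans ?_
    simp only [enorm_eq_ofReal_abs]
    exact lintegral_mono_set (Ioo_subset_Ioo_right hb.2.le)
  have hlim : Tendsto (fun b => ENNReal.ofReal |v b - v r|) (𝓝[<] 1)
      (𝓝 (ENNReal.ofReal |v r|)) := by
    simpa using ENNReal.tendsto_ofReal (hv.lim_one.sub_const (v r)).abs
  exact le_of_tendsto hlim (Filter.mem_of_superset (Ioo_mem_nhdsLT hr.2) hincr)

theorem lintegral_energy_eq (hv : MemX1 N k v) (hn : X1norm N k v = 1) :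
    ∫⁻ s in Ioo 0 1,
        ENNReal.ofReal (s ^ ((N : ℝ) - k)) * ENNReal.ofReal |deriv v s| ^ ((k : ℝ) + 1) =
      ENNReal.ofReal (1 / omegaNk N k) := by
  have hnonneg : 0 ≤ᵐ[volume.restrict (Ioo 0 1)]
      fun s : ℝ => s ^ ((N : ℝ) - k) * |deriv v s| ^ ((k : ℝ) + 1) :=
    (ae_restrict_mem measurableSet_Ioo).mono fun s hs =>
      mul_nonneg (rpow_nonneg hs.1.le _) (by positivity)
  set J := ∫ s in Ioo 0 1, s ^ ((N : ℝ) - k) * |deriv v s| ^ ((k : ℝ) + 1)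
  have hprod : omegaNk N k * J = 1 := by
    have h0 := mul_nonneg (omegaNk_nonneg N k) (integral_nonneg_of_ae hnonneg)
    rw [X1norm, one_div] at hn
    calc omegaNk N k * J = ((omegaNk N k * J) ^ ((k : ℝ) + 1)⁻¹) ^ ((k : ℝ) + 1) :=
          (rpow_inv_rpow h0 (by positivity)).symm
      _ = 1 := by rw [hn, one_rpow]
  have hJ : J = 1 / omegaNk N k := by
    rw [eq_div_iff (left_ne_zero_of_mul_eq_one hprod), mul_comm, hprod]
  rw [← hJ, ofReal_integral_eq_lintegral_ofReal hv.int_deriv hnonneg]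
  refine setLIntegral_congr_fun measurableSet_Ioo fun s hs => ?_
  rw [ENNReal.ofReal_mul (rpow_nonneg hs.1.le _),
    ENNReal.ofReal_rpow_of_nonneg (abs_nonneg _) (by positivity)]

theorem ofReal_abs_rpow_le_weighted (hv : MemX1 N k v) {δ : ℝ} (hk : 0 < k) (hδ : k < δ)
    {r : ℝ} (hr : r ∈ Ioo 0 1) :
    ENNReal.ofReal |v r| ^ ((k : ℝ) + 1) ≤
      ENNReal.ofReal ((k / (δ - k)) ^ (k : ℝ) * r ^ (k - δ)) *
        ∫⁻ s in Ioo r 1, ENNReal.ofReal (s ^ δ) * ENNReal.ofReal |deriv v s| ^ ((k : ℝ) + 1) :=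
  (ENNReal.rpow_le_rpow (hv.abs_le_lintegral_deriv hr) (by positivity)).trans
    (rpow_lintegral_Ioo_le_mul_weighted 1 (by exact_mod_cast hk) hδ hr.1
      (measurable_deriv v).abs.ennreal_ofReal)

theorem abs_le_decayConst_mul_rpow (hv : MemX1 N k v) (hn : X1norm N k v = 1) (hk : 0 < k)
    (hN : 2 * k < N) {r : ℝ} (hr : r ∈ Ioo 0 1) :
    |v r| ≤ decayConst N k * r ^ (-(((N : ℝ) - 2 * k) / (k + 1))) := by
  have hNk : (0 : ℝ) < N - 2 * k := sub_pos.2 (by exact_mod_cast hN)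
  have hc : 0 ≤ ((k : ℝ) / (N - 2 * k)) ^ (k : ℝ) :=
    rpow_nonneg (div_nonneg k.cast_nonneg hNk.le) _
  have hpow : |v r| ^ ((k : ℝ) + 1) ≤
      ((k : ℝ) / (N - 2 * k)) ^ (k : ℝ) * r ^ (2 * k - (N : ℝ)) * (1 / omegaNk N k) := by
    have hE := (lintegral_mono_set (Ioo_subset_Ioo_left hr.1.le)).trans_eq
      (hv.lintegral_energy_eq hn)
    have h := (hv.ofReal_abs_rpow_le_weighted (δ := N - k) hk (by linarith) hr).trans
      (mul_le_mul_right hE _)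
    rwa [show (N : ℝ) - k - k = N - 2 * k by ring, show (k : ℝ) - (N - k) = 2 * k - N by ring,
      ENNReal.ofReal_rpow_of_nonneg (abs_nonneg _) (by positivity),
      ← ENNReal.ofReal_mul (mul_nonneg hc (rpow_nonneg hr.1.le _)),
      ENNReal.ofReal_le_ofReal_iff (mul_nonneg (mul_nonneg hc (rpow_nonneg hr.1.le _))
        (one_div_nonneg.2 (omegaNk_nonneg N k)))] at h
  calc |v r| = (|v r| ^ ((k : ℝ) + 1)) ^ ((k : ℝ) + 1)⁻¹ :=
        (rpow_rpow_inv (abs_nonneg _) (by positivity)).symm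
    _ ≤ (((k : ℝ) / (N - 2 * k)) ^ (k : ℝ) / omegaNk N k * r ^ (2 * k - (N : ℝ))) ^
          ((k : ℝ) + 1)⁻¹ := by
        gcongr
        exact hpow.trans_eq (by ring)
    _ = _ := by
      rw [mul_rpow (div_nonneg hc (omegaNk_nonneg N k)) (rpow_nonneg hr.1.le _),
        ← rpow_mul hr.1.le, decayConst, one_div]
      congr 2
      ring

theorem abs_rpow_excess_le (hv : MemX1 N k v) (hn : X1norm N k v = 1) (hk : 0 < k)
    (hN : 2 * k < N) {α : ℝ} (hα : 0 < α) {r : ℝ} (hr : r ∈ Ioo 0 1) :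
    |v r| ^ (kstar N k - (k + 1) + r ^ α) ≤ excessConst N k α * r ^ (-(2 * (k : ℝ))) := by
  have hNk : (0 : ℝ) < N - 2 * k := sub_pos.2 (by exact_mod_cast hN)
  have hβ : 0 < ((N : ℝ) - 2 * k) / (k + 1) := by positivity
  have h := rpow_add_rpow_le_of_le_mul_rpow_neg (abs_nonneg _)
    (hv.abs_le_decayConst_mul_rpow hn hk hN hr) hr.1 hr.2.le hβ.le
    (sub_nonneg.2 (add_one_le_kstar hN)) hα
  rwa [div_mul_kstar_sub_eq hN, show kstar N k - (k + 1) + 1 = kstar N k - k by ring] at h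

theorem ofReal_integrand_le (hv : MemX1 N k v) (hn : X1norm N k v = 1) (hk : 0 < k)
    (hN : 2 * k < N) {α : ℝ} (hα : 0 < α) {r : ℝ} (hr : r ∈ Ioo 0 1) :
    ENNReal.ofReal (r ^ ((N : ℝ) - 1) * |v r| ^ (kstar N k + r ^ α)) ≤
      ENNReal.ofReal (excessConst N k α * (2 * k) ^ (k : ℝ) * r ^ ((N : ℝ) - 2 * k - 3 / 2)) *
        ∫⁻ s in Ioo r 1, ENNReal.ofReal (s ^ ((k : ℝ) + 1 / 2)) *
          ENNReal.ofReal |deriv v s| ^ ((k : ℝ) + 1) := by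
  set C := excessConst N k α * r ^ ((N : ℝ) - 1 - 2 * k) with hCdef
  have hC : 0 ≤ C := mul_nonneg (excessConst_pos N k α).le (rpow_nonneg hr.1.le _)
  have hreal : r ^ ((N : ℝ) - 1) * |v r| ^ (kstar N k + r ^ α) ≤ C * |v r| ^ ((k : ℝ) + 1) := by
    rw [show kstar N k + r ^ α = (k + 1) + (kstar N k - (k + 1) + r ^ α) by ring,
      rpow_add_of_nonneg (abs_nonneg _) (by positivity)
        (add_nonneg (sub_nonneg.2 (add_one_le_kstar hN)) (rpow_pos_of_pos hr.1 α).le)]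
    calc r ^ ((N : ℝ) - 1) * (|v r| ^ ((k : ℝ) + 1) * |v r| ^ (kstar N k - (k + 1) + r ^ α))
        ≤ r ^ ((N : ℝ) - 1) *
            (|v r| ^ ((k : ℝ) + 1) * (excessConst N k α * r ^ (-(2 * (k : ℝ))))) := by
          gcongr
          · exact rpow_nonneg hr.1.le _
          · exact hv.abs_rpow_excess_le hn hk hN hα hr
      _ = C * |v r| ^ ((k : ℝ) + 1) := by
          rw [hCdef, sub_eq_add_neg _ (2 * (k : ℝ)), rpow_add hr.1]
          ring
  calc ENNReal.ofReal (r ^ ((N : ℝ) - 1) * |v r| ^ (kstar N k + r ^ α))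
      ≤ ENNReal.ofReal C * ENNReal.ofReal |v r| ^ ((k : ℝ) + 1) := by
        rw [ENNReal.ofReal_rpow_of_nonneg (abs_nonneg _) (by positivity),
          ← ENNReal.ofReal_mul hC]
        exact ENNReal.ofReal_le_ofReal hreal
    _ ≤ ENNReal.ofReal C *
          (ENNReal.ofReal ((k / (k + 1 / 2 - k)) ^ (k : ℝ) * r ^ ((k : ℝ) - (k + 1 / 2))) *
            ∫⁻ s in Ioo r 1, ENNReal.ofReal (s ^ ((k : ℝ) + 1 / 2)) *
              ENNReal.ofReal |deriv v s| ^ ((k : ℝ) + 1)) :=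
        mul_le_mul_right (hv.ofReal_abs_rpow_le_weighted (δ := k + 1 / 2) hk (by linarith) hr) _
    _ = _ := by
        rw [← mul_assoc, ← ENNReal.ofReal_mul hC]
        congr 2
        rw [show (k : ℝ) / (k + 1 / 2 - k) = 2 * k by ring,
          show (k : ℝ) - (k + 1 / 2) = -(1 / 2) by ring,
          show (N : ℝ) - 2 * k - 3 / 2 = (N - 1 - 2 * k) + -(1 / 2) by ring, rpow_add hr.1]
        ring

theorem lintegral_rpow_mul_tail_eq (hv : MemX1 N k v) (hn : X1norm N k v = 1)
    (hN : 2 * k < N) :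
    ∫⁻ r in Ioo 0 1, ENNReal.ofReal (r ^ ((N : ℝ) - 2 * k - 3 / 2)) *
        ∫⁻ s in Ioo r 1, ENNReal.ofReal (s ^ ((k : ℝ) + 1 / 2)) *
          ENNReal.ofReal |deriv v s| ^ ((k : ℝ) + 1) =
      ENNReal.ofReal (1 / (((N : ℝ) - 2 * k - 1 / 2) * omegaNk N k)) := by
  have hN1 : (1 : ℝ) ≤ N - 2 * k := by
    rw [le_sub_iff_add_le']
    exact_mod_cast Nat.succ_le_of_lt hN
  have hγ : (0 : ℝ) < N - 2 * k - 3 / 2 + 1 := by linarith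
  have hc : (0 : ℝ) ≤ 1 / (N - 2 * k - 1 / 2) := one_div_nonneg.2 (by linarith)
  rw [lintegral_Ioo_rpow_mul_lintegral_Ioo (by linarith) 1 (by fun_prop)]
  calc ∫⁻ s in Ioo 0 1,
        ENNReal.ofReal (s ^ ((N : ℝ) - 2 * k - 3 / 2 + 1) / (N - 2 * k - 3 / 2 + 1)) *
          (ENNReal.ofReal (s ^ ((k : ℝ) + 1 / 2)) * ENNReal.ofReal |deriv v s| ^ ((k : ℝ) + 1))
      = ∫⁻ s in Ioo 0 1, ENNReal.ofReal (1 / (N - 2 * k - 1 / 2)) *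
          (ENNReal.ofReal (s ^ ((N : ℝ) - k)) * ENNReal.ofReal |deriv v s| ^ ((k : ℝ) + 1)) := by
        refine setLIntegral_congr_fun measurableSet_Ioo fun s hs => ?_
        rw [← mul_assoc, ← mul_assoc,
          ← ENNReal.ofReal_mul (div_nonneg (rpow_nonneg hs.1.le _) hγ.le),
          ← ENNReal.ofReal_mul hc, div_mul_eq_mul_div, ← rpow_add hs.1,
          show (N : ℝ) - 2 * k - 3 / 2 + 1 + (k + 1 / 2) = N - k by ring,
          show (N : ℝ) - 2 * k - 3 / 2 + 1 = N - 2 * k - 1 / 2 by ring]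
        ring_nf
    _ = _ := by
        rw [lintegral_const_mul' _ _ ENNReal.ofReal_ne_top, hv.lintegral_energy_eq hn,
          ← ENNReal.ofReal_mul hc, one_div_mul_one_div]

theorem superInt_le (hv : MemX1 N k v) (hn : X1norm N k v = 1) (hk : 0 < k) (hN : 2 * k < N)
    {α : ℝ} (hα : 0 < α) : superInt N k α v ≤ superBound N k α := by
  have hD : 0 ≤ excessConst N k α * (2 * k) ^ (k : ℝ) :=
    mul_nonneg (excessConst_pos N k α).le (by positivity)
  have hB : 0 ≤ superBound N k α := by
    have : (1 : ℝ) ≤ N - 2 * k := by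
      rw [le_sub_iff_add_le']
      exact_mod_cast Nat.succ_le_of_lt hN
    exact div_nonneg hD (mul_nonneg (by linarith) (omegaNk_nonneg N k))
  -- `‖∫ f‖ₑ ≤ ∫⁻ ‖f‖ₑ` holds without integrability, so `f` need not be shown measurable.
  set f := fun r : ℝ => r ^ ((N : ℝ) - 1) * |v r| ^ (kstar N k + r ^ α)
  have hlint : ∫⁻ r in Ioo 0 1, ‖f r‖ₑ ≤ ENNReal.ofReal (superBound N k α) :=
    calc ∫⁻ r in Ioo 0 1, ‖f r‖ₑ
        ≤ ∫⁻ r in Ioo 0 1, ENNReal.ofReal (excessConst N k α * (2 * k) ^ (k : ℝ)) *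
            (ENNReal.ofReal (r ^ ((N : ℝ) - 2 * k - 3 / 2)) *
              ∫⁻ s in Ioo r 1, ENNReal.ofReal (s ^ ((k : ℝ) + 1 / 2)) *
                ENNReal.ofReal |deriv v s| ^ ((k : ℝ) + 1)) := by
          refine setLIntegral_mono' measurableSet_Ioo fun r hr => ?_
          rw [enorm_eq_ofReal_abs,
            abs_of_nonneg (mul_nonneg (rpow_nonneg hr.1.le _) (by positivity)),
            ← mul_assoc, ← ENNReal.ofReal_mul hD]
          exact hv.ofReal_integrand_le hn hk hN hα hr
      _ = ENNReal.ofReal (superBound N k α) := by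
          rw [lintegral_const_mul' _ _ ENNReal.ofReal_ne_top, hv.lintegral_rpow_mul_tail_eq hn hN,
            ← ENNReal.ofReal_mul hD, mul_one_div, superBound]
  have habs : |superInt N k α v| ≤ superBound N k α := by
    rw [← ENNReal.ofReal_le_ofReal_iff hB, ← enorm_eq_ofReal_abs]
    exact (enorm_integral_le_lintegral_enorm f).trans hlint
  exact (le_abs_self _).trans habs

end MemX1

/-- **Theorem 1 (radial form).** For every `α > 0` the supremum
`V_{k,N,α} = sup { ∫_0^1 r^{N-1} |v|^{k*+r^α} dr : v ∈ X_1, ‖v‖_{X_1} = 1 }` is finite. -/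
theorem thm1_radial (N k : ℕ) (hk : 1 ≤ k) (hN : 2 * k < N) (α : ℝ) (hα : 0 < α) :
    BddAbove ((fun v => superInt N k α v) ''
      {v : ℝ → ℝ | MemX1 N k v ∧ X1norm N k v = 1}) := by
  refine ⟨superBound N k α, ?_⟩
  rintro _ ⟨v, ⟨hv, hn⟩, rfl⟩
  exact hv.superInt_le hn hk hN hα
end

section
/- (Corollary 1, radial form: continuous embedding into a variable exponent Lebesgue space.) Let α > 0. There exists a constant λ* > 0 such that for every nonzero v ∈ X_1, ω_{N−1} ∫_0^1 r^{N−1} (|v(r)|/(λ* ‖v‖_{X_1}))^{k*+r^α} dr ≤ 1. (Equivalently, the Luxemburg norm of u(x) = −v(|x|) in the variable exponent Lebesgue space L_{k*+|x|^α}(B) is at most λ* ‖v‖_{X_1}.) -/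
/-!
Write `E = ∫₀¹ r^{N-k} |v'|^{k+1}`, so that `‖v‖_{X_1}^{k+1} = ω_{N,k} E`. Hölder's inequality
applied to `v(r) = -∫_r^1 v'` gives the radial decay `|v(r)|^{k+1} ≤ (k/(N-2k))^k r^{-(N-2k)} E`,
so for `λ` large `ρ = |v|/(λ‖v‖)` satisfies `ρ ≤ r^{-θ}` with `θ = (N-2k)/(k+1)`. Then the
variable part of the exponent costs a bounded factor, `ρ^{r^α} ≤ r^{-θ r^α} ≤ e^{θ/α}`, and the
excess of the critical exponent over `k+1` is absorbed by the weight, `ρ^{k*} ≤ ρ^{k+1} r^{-2k}`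
because `θ (k* - k - 1) = 2k`. What remains is `∫₀¹ r^{N-2k-1} |v|^{k+1}`, which a Hardy
inequality bounds by a multiple of `E`; a large `λ` makes the total at most `1/ω_{N-1}`.
-/

open MeasureTheory Real Set Filter Asymptotics

open scoped ENNReal Topology

theorem ENNReal.lintegral_rpow_le_lintegral_mul_rpow_mul_lintegral_rpow {α : Type*}
    [MeasurableSpace α] {μ : Measure α} {p : ℝ} (hp : 1 < p) {f w : α → ℝ≥0∞}
    (hf : AEMeasurable f μ) (hw : AEMeasurable w μ) (hw0 : ∀ᵐ x ∂μ, w x ≠ 0) (hwtop : ∀ᵐ x ∂μ, w x ≠ ∞) :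
    (∫⁻ x, f x ∂μ) ^ p ≤
      (∫⁻ x, w x * f x ^ p ∂μ) * (∫⁻ x, w x ^ (-(p - 1)⁻¹) ∂μ) ^ (p - 1) := by
  have hp0 : 0 < p := by linarith
  have hpq : p.HolderConjugate (p / (p - 1)) := Real.HolderConjugate.conjExponent hp
  have hsplit : ∫⁻ x, f x * w x ^ p⁻¹ * w x ^ (-p⁻¹) ∂μ = ∫⁻ x, f x ∂μ := by
    refine lintegral_congr_ae ?_
    filter_upwards [hw0, hwtop] with x hx0 hxtop
    rw [mul_assoc, ← ENNReal.rpow_add _ _ hx0 hxtop, add_neg_cancel, ENNReal.rpow_zero, mul_one]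
  have hF : ∀ x, (f x * w x ^ p⁻¹) ^ p = w x * f x ^ p := fun x => by
    rw [ENNReal.mul_rpow_of_nonneg _ _ hp0.le, ← ENNReal.rpow_mul, inv_mul_cancel₀ hp0.ne',
      ENNReal.rpow_one, mul_comm]
  have hG : ∀ x, (w x ^ (-p⁻¹)) ^ (p / (p - 1)) = w x ^ (-(p - 1)⁻¹) := fun x => by
    rw [← ENNReal.rpow_mul]
    congr 1
    field_simp
  have holder := ENNReal.lintegral_mul_le_Lp_mul_Lq μ hpq (hf.mul (hw.pow_const p⁻¹))
    (hw.pow_const (-p⁻¹))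
  simp only [Pi.mul_apply, hsplit, hF, hG] at holder
  calc (∫⁻ x, f x ∂μ) ^ p
      ≤ ((∫⁻ x, w x * f x ^ p ∂μ) ^ (1 / p) *
          (∫⁻ x, w x ^ (-(p - 1)⁻¹) ∂μ) ^ (1 / (p / (p - 1)))) ^ p :=
        ENNReal.rpow_le_rpow holder hp0.le
    _ = _ := by
        rw [ENNReal.mul_rpow_of_nonneg _ _ hp0.le, ← ENNReal.rpow_mul, ← ENNReal.rpow_mul,
          one_div_mul_cancel hp0.ne', ENNReal.rpow_one, show 1 / (p / (p - 1)) * p = p - 1 by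
            field_simp]

theorem lintegral_Ioo_rpow_le {β a : ℝ} (hβ : β < -1) (ha : 0 < a) :
    ∫⁻ s in Ioo a 1, ENNReal.ofReal (s ^ β) ≤ ENNReal.ofReal (a ^ (β + 1) / -(β + 1)) := by
  rcases le_or_gt 1 a with ha1 | ha1
  · simp [Ioo_eq_empty_of_le ha1]
  have h0 : (0 : ℝ) ∉ uIcc a 1 := by
    rw [uIcc_of_le ha1.le]; exact fun h => absurd h.1 (not_le.2 ha)
  have hint : IntegrableOn (fun s : ℝ => s ^ β) (Ioo a 1) :=
    (intervalIntegral.intervalIntegrable_rpow (Or.inr h0)).1.mono_set Ioo_subset_Ioc_self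
  rw [← ofReal_integral_eq_lintegral_ofReal hint
    ((ae_restrict_mem measurableSet_Ioo).mono fun s hs => rpow_nonneg (ha.trans hs.1).le _),
    integral_Ioc_eq_integral_Ioo.symm, ← intervalIntegral.integral_of_le ha1.le,
    integral_rpow (Or.inr ⟨hβ.ne, h0⟩), one_rpow]
  apply ENNReal.ofReal_le_ofReal
  rw [div_neg, ← neg_div]
  exact div_le_div_of_nonpos_of_le (by linarith) (by linarith)

theorem lintegral_Ioo_zero_rpow_sub_one {β s : ℝ} (hβ : 0 < β) (hs : 0 ≤ s) :
    ∫⁻ r in Ioo 0 s, ENNReal.ofReal (r ^ (β - 1)) = ENNReal.ofReal (s ^ β / β) := by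
  have hint : IntegrableOn (fun r : ℝ => r ^ (β - 1)) (Ioo 0 s) :=
    (intervalIntegral.intervalIntegrable_rpow' (by linarith)).1.mono_set Ioo_subset_Ioc_self
  rw [← ofReal_integral_eq_lintegral_ofReal hint
    ((ae_restrict_mem measurableSet_Ioo).mono fun r hr => rpow_nonneg hr.1.le _),
    integral_Ioc_eq_integral_Ioo.symm, ← intervalIntegral.integral_of_le hs,
    integral_rpow (Or.inl (by linarith)), sub_add_cancel, zero_rpow hβ.ne', sub_zero]

theorem lintegral_Ioo_rpow_le_mul_lintegral_rpow_mul {k m a : ℝ} (hk : 0 < k) (hkm : k < m)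
    (ha : 0 < a) {f : ℝ → ℝ≥0∞} (hf : AEMeasurable f (volume.restrict (Ioo a 1))) :
    (∫⁻ s in Ioo a 1, f s) ^ (k + 1) ≤
      ENNReal.ofReal ((k / (m - k)) ^ k * a ^ (-(m - k))) *
        ∫⁻ s in Ioo a 1, ENNReal.ofReal (s ^ m) * f s ^ (k + 1) := by
  have hw_pos : ∀ᵐ s ∂(volume.restrict (Ioo a 1)), 0 < s ^ m :=
    (ae_restrict_mem measurableSet_Ioo).mono fun s hs => rpow_pos_of_pos (ha.trans hs.1) m
  have holder := ENNReal.lintegral_rpow_le_lintegral_mul_rpow_mul_lintegral_rpow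
    (by linarith : (1 : ℝ) < k + 1) hf
    (by fun_prop : Measurable fun s : ℝ => ENNReal.ofReal (s ^ m)).aemeasurable
    (hw_pos.mono fun s hs => (ENNReal.ofReal_pos.2 hs).ne')
    (ae_of_all _ fun _ => ENNReal.ofReal_ne_top)
  have hβ : -(m / k) < -1 := by rw [neg_lt_neg_iff, one_lt_div hk]; exact hkm
  have hdual : ∫⁻ s in Ioo a 1, ENNReal.ofReal (s ^ m) ^ (-k⁻¹) =
      ∫⁻ s in Ioo a 1, ENNReal.ofReal (s ^ (-(m / k))) := by
    refine lintegral_congr_ae ?_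
    filter_upwards [ae_restrict_mem measurableSet_Ioo] with s hs
    rw [ENNReal.ofReal_rpow_of_pos (rpow_pos_of_pos (ha.trans hs.1) m),
      ← rpow_mul (ha.trans hs.1).le, mul_neg, ← div_eq_mul_inv]
  have hconst : ENNReal.ofReal (a ^ (-(m / k) + 1) / -(-(m / k) + 1)) ^ k =
      ENNReal.ofReal ((k / (m - k)) ^ k * a ^ (-(m - k))) := by
    have hδ : -(-(m / k) + 1) = (m - k) / k := by field_simp; ring
    have hkm' : 0 ≤ k / (m - k) := div_nonneg hk.le (by linarith)
    rw [hδ, div_div_eq_mul_div, ENNReal.ofReal_rpow_of_nonneg (by positivity) hk.le]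
    congr 1
    rw [mul_div_assoc, mul_rpow (rpow_nonneg ha.le _) hkm', ← rpow_mul ha.le, mul_comm,
      show (-(m / k) + 1) * k = -(m - k) by field_simp; ring]
  calc (∫⁻ s in Ioo a 1, f s) ^ (k + 1)
      ≤ (∫⁻ s in Ioo a 1, ENNReal.ofReal (s ^ m) * f s ^ (k + 1)) *
          (∫⁻ s in Ioo a 1, ENNReal.ofReal (s ^ (-(m / k)))) ^ k := by
        rwa [add_sub_cancel_right, hdual] at holder
    _ ≤ (∫⁻ s in Ioo a 1, ENNReal.ofReal (s ^ m) * f s ^ (k + 1)) *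
          ENNReal.ofReal (a ^ (-(m / k) + 1) / -(-(m / k) + 1)) ^ k := by
        gcongr
        exact lintegral_Ioo_rpow_le hβ ha
    _ = _ := by rw [hconst, mul_comm]

theorem lintegral_Ioo_mul_lintegral_Ioo_swap {a b : ℝ} {g h : ℝ → ℝ≥0∞} (hg : Measurable g)
    (hh : Measurable h) :
    ∫⁻ r in Ioo a b, h r * ∫⁻ s in Ioo r b, g s =
      ∫⁻ s in Ioo a b, g s * ∫⁻ r in Ioo a s, h r := by
  let F : ℝ → ℝ → ℝ≥0∞ := fun r s =>
    {p : ℝ × ℝ | p.1 < p.2}.indicator (fun p => h p.1 * g p.2) (r, s)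
  have hFm : Measurable (Function.uncurry F) :=
    ((hh.comp measurable_fst).mul (hg.comp measurable_snd)).indicator
      (measurableSet_lt measurable_fst measurable_snd)
  have hrow : ∀ r ∈ Ioo a b, ∫⁻ s in Ioo a b, F r s = h r * ∫⁻ s in Ioo r b, g s := by
    intro r hr
    have hF : ∀ s, F r s = (Ioi r).indicator (fun s => h r * g s) s := fun s => rfl
    simp_rw [hF]
    rw [lintegral_indicator measurableSet_Ioi, Measure.restrict_restrict measurableSet_Ioi,
      Ioi_inter_Ioo, max_eq_left hr.1.le, lintegral_const_mul _ hg]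
  have hcol : ∀ s ∈ Ioo a b, ∫⁻ r in Ioo a b, F r s = g s * ∫⁻ r in Ioo a s, h r := by
    intro s hs
    have hF : ∀ r, F r s = (Iio s).indicator (fun r => g s * h r) r := fun r => by
      simp only [F, indicator, mem_ofPred_eq, mem_Iio, mul_comm]
    simp_rw [hF]
    rw [lintegral_indicator measurableSet_Iio, Measure.restrict_restrict measurableSet_Iio,
      Iio_inter_Ioo, min_eq_left hs.2.le, lintegral_const_mul _ hh]
  rw [setLIntegral_congr_fun measurableSet_Ioo (fun r hr => (hrow r hr).symm),
    setLIntegral_congr_fun measurableSet_Ioo (fun s hs => (hcol s hs).symm)]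
  exact lintegral_lintegral_swap hFm.aemeasurable

theorem rpow_rpow_le_exp_div {r θ α : ℝ} (hr : 0 < r) (hθ : 0 ≤ θ) (hα : 0 < α) :
    (r ^ (-θ)) ^ (r ^ α) ≤ exp (θ / α) := by
  have hlog : -log r * r ^ α ≤ 1 / α := by
    have h := Real.log_le_rpow_div (inv_pos.2 hr).le hα
    rw [log_inv, inv_rpow hr.le] at h
    calc -log r * r ^ α ≤ (r ^ α)⁻¹ / α * r ^ α := by gcongr
      _ = 1 / α := by field_simp
  rw [← rpow_mul hr.le, rpow_def_of_pos hr]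
  gcongr
  calc log r * (-θ * r ^ α) = θ * (-log r * r ^ α) := by ring
    _ ≤ θ * (1 / α) := by gcongr
    _ = θ / α := by ring

theorem rpow_add_rpow_le_exp_mul {r θ α p q ρ : ℝ} (hr : 0 < r) (hθ : 0 ≤ θ) (hα : 0 < α)
    (hp : 0 ≤ p) (hpq : p ≤ q) (hρ : 0 ≤ ρ) (hρr : ρ ≤ r ^ (-θ)) :
    ρ ^ (q + r ^ α) ≤ exp (θ / α) * r ^ (-(θ * (q - p))) * ρ ^ p := by
  rcases hρ.eq_or_lt with rfl | hρ
  · rw [zero_rpow (add_pos_of_nonneg_of_pos (hp.trans hpq) (rpow_pos_of_pos hr α)).ne']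
    positivity
  calc ρ ^ (q + r ^ α) = ρ ^ p * ρ ^ (q - p) * ρ ^ (r ^ α) := by
        rw [← rpow_add hρ, ← rpow_add hρ]; ring_nf
    _ ≤ ρ ^ p * (r ^ (-θ)) ^ (q - p) * (r ^ (-θ)) ^ (r ^ α) := by
        gcongr
    _ ≤ ρ ^ p * r ^ (-(θ * (q - p))) * exp (θ / α) := by
        rw [← rpow_mul hr.le, neg_mul]
        gcongr
        exact rpow_rpow_le_exp_div hr hθ hα
    _ = _ := by ring

theorem cast_sub_two_mul_pos {N k : ℕ} (hN : 2 * k < N) : (0 : ℝ) < N - 2 * k := by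
  have : ((2 * k : ℕ) : ℝ) < N := by exact_mod_cast hN
  push_cast at this
  linarith

theorem omegaSphere_pos {N : ℕ} (hN : 0 < N) : 0 < omegaSphere N :=
  div_pos (by positivity) (Gamma_pos_of_pos (by positivity))

theorem omegaNk_pos {N k : ℕ} (hkN : k ≤ N) (hN : 0 < N) : 0 < omegaNk N k :=
  div_pos (mul_pos (omegaSphere_pos hN) (by exact_mod_cast Nat.choose_pos hkN))
    (by exact_mod_cast hN)

noncomputable def X1energy (N k : ℕ) (v : ℝ → ℝ) : ℝ :=
  ∫ r in Ioo (0 : ℝ) 1, r ^ ((N : ℝ) - k) * |deriv v r| ^ ((k : ℝ) + 1)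

theorem X1energy_nonneg (N k : ℕ) (v : ℝ → ℝ) : 0 ≤ X1energy N k v :=
  setIntegral_nonneg measurableSet_Ioo fun r hr => by have := hr.1; positivity

theorem X1norm_eq (N k : ℕ) (v : ℝ → ℝ) :
    X1norm N k v = (omegaNk N k * X1energy N k v) ^ (1 / ((k : ℝ) + 1)) := rfl

namespace MemX1

variable {N k : ℕ} {v : ℝ → ℝ}

theorem lintegral_deriv_eq (hv : MemX1 N k v) :
    ∫⁻ r in Ioo 0 1, ENNReal.ofReal (r ^ ((N : ℝ) - k)) * ‖deriv v r‖ₑ ^ ((k : ℝ) + 1) =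
      ENNReal.ofReal (X1energy N k v) := by
  have hnonneg : ∀ᵐ r ∂(volume.restrict (Ioo (0 : ℝ) 1)),
      0 ≤ r ^ ((N : ℝ) - k) * |deriv v r| ^ ((k : ℝ) + 1) :=
    (ae_restrict_mem measurableSet_Ioo).mono fun r hr => by
      have := hr.1; positivity
  rw [X1energy, ofReal_integral_eq_lintegral_ofReal hv.int_deriv hnonneg]
  refine lintegral_congr_ae ((ae_restrict_mem measurableSet_Ioo).mono fun r hr => ?_)
  dsimp only
  rw [ENNReal.ofReal_mul (rpow_nonneg hr.1.le _), Real.enorm_eq_ofReal_abs,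
    ENNReal.ofReal_rpow_of_nonneg (abs_nonneg _) (by positivity)]

theorem integrableOn_deriv (hv : MemX1 N k v) (hk : 0 < k) (hN : 2 * k < N) {a : ℝ}
    (ha : 0 < a) : IntegrableOn (deriv v) (Ioo a 1) := by
  refine ⟨(measurable_deriv v).aestronglyMeasurable, hasFiniteIntegral_iff_enorm.2 ?_⟩
  have hkN : (k : ℝ) < (N : ℝ) - k := by linarith [cast_sub_two_mul_pos hN]
  have hbound := lintegral_Ioo_rpow_le_mul_lintegral_rpow_mul (by exact_mod_cast hk) hkN ha
    (measurable_deriv v).enorm.aemeasurable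
  have hfin : (∫⁻ s in Ioo a 1, ‖deriv v s‖ₑ) ^ ((k : ℝ) + 1) < ∞ := by
    refine hbound.trans_lt (ENNReal.mul_lt_top ENNReal.ofReal_lt_top ?_)
    calc _ ≤ ∫⁻ s in Ioo 0 1, ENNReal.ofReal (s ^ ((N : ℝ) - k)) * ‖deriv v s‖ₑ ^ ((k : ℝ) + 1) :=
          lintegral_mono_set fun s hs => ⟨ha.trans hs.1, hs.2⟩
      _ < ∞ := hv.lintegral_deriv_eq ▸ ENNReal.ofReal_lt_top
  exact (ENNReal.rpow_lt_top_iff_of_pos (by positivity)).1 hfin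

theorem eq_neg_setIntegral_deriv (hv : MemX1 N k v) {a : ℝ} (ha : a ∈ Ioo 0 1)
    (hint : IntegrableOn (deriv v) (Ioo a 1)) : v a = -∫ s in Ioo a 1, deriv v s := by
  have hprim : Tendsto (fun b => v a + ∫ s in a..b, deriv v s) (𝓝[<] 1)
      (𝓝 (v a + ∫ s in a..1, deriv v s)) := by
    have hcont := intervalIntegral.continuousOn_primitive_interval'
      ((intervalIntegrable_iff_integrableOn_Ioo_of_le ha.2.le).2 hint) left_mem_uIcc
    rw [← nhdsWithin_Ioo_eq_nhdsLT ha.2]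
    exact tendsto_const_nhds.add <| ((hcont 1 right_mem_uIcc).mono
      (Ioo_subset_Icc_self.trans Icc_subset_uIcc)).tendsto
  have hftc : (fun b => v a + ∫ s in a..b, deriv v s) =ᶠ[𝓝[<] 1] v := by
    rw [← nhdsWithin_Ioo_eq_nhdsLT ha.2]
    filter_upwards [self_mem_nhdsWithin] with b hb
    linarith [(hv.ftc a ha b ⟨ha.1.trans hb.1, hb.2⟩).2]
  have hlim := tendsto_nhds_unique (hprim.congr' hftc) hv.lim_one
  rw [intervalIntegral.integral_of_le ha.2.le, integral_Ioc_eq_integral_Ioo] at hlim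
  linarith

theorem enorm_le_lintegral_enorm_deriv (hv : MemX1 N k v) (hk : 0 < k) (hN : 2 * k < N)
    {a : ℝ} (ha : a ∈ Ioo 0 1) : ‖v a‖ₑ ≤ ∫⁻ s in Ioo a 1, ‖deriv v s‖ₑ := by
  rw [hv.eq_neg_setIntegral_deriv ha (hv.integrableOn_deriv hk hN ha.1), enorm_neg]
  exact enorm_integral_le_lintegral_enorm _

theorem enorm_rpow_le (hv : MemX1 N k v) (hk : 0 < k) (hN : 2 * k < N) {m a : ℝ}
    (hkm : (k : ℝ) < m) (ha : a ∈ Ioo 0 1) :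
    ‖v a‖ₑ ^ ((k : ℝ) + 1) ≤ ENNReal.ofReal ((k / (m - k)) ^ (k : ℝ) * a ^ (-(m - k))) *
      ∫⁻ s in Ioo a 1, ENNReal.ofReal (s ^ m) * ‖deriv v s‖ₑ ^ ((k : ℝ) + 1) :=
  (ENNReal.rpow_le_rpow (hv.enorm_le_lintegral_enorm_deriv hk hN ha) (by positivity)).trans
    (lintegral_Ioo_rpow_le_mul_lintegral_rpow_mul (by exact_mod_cast hk) hkm ha.1
      (measurable_deriv v).enorm.aemeasurable)

theorem abs_rpow_le (hv : MemX1 N k v) (hk : 0 < k) (hN : 2 * k < N) {a : ℝ}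
    (ha : a ∈ Ioo 0 1) :
    |v a| ^ ((k : ℝ) + 1) ≤
      (k / ((N : ℝ) - 2 * k)) ^ (k : ℝ) * a ^ (-((N : ℝ) - 2 * k)) * X1energy N k v := by
  have hN' := cast_sub_two_mul_pos hN
  have hpoint := hv.enorm_rpow_le hk hN (m := N - k) (by linarith) ha
  have htail : ∫⁻ s in Ioo a 1, ENNReal.ofReal (s ^ ((N : ℝ) - k)) * ‖deriv v s‖ₑ ^ ((k : ℝ) + 1) ≤
      ENNReal.ofReal (X1energy N k v) :=
    hv.lintegral_deriv_eq ▸ lintegral_mono_set fun s hs => ⟨ha.1.trans hs.1, hs.2⟩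
  have hC : 0 ≤ (k / ((N : ℝ) - 2 * k)) ^ (k : ℝ) * a ^ (-((N : ℝ) - 2 * k)) :=
    mul_nonneg (rpow_nonneg (div_nonneg k.cast_nonneg hN'.le) _) (rpow_nonneg ha.1.le _)
  have hE := hpoint.trans (mul_le_mul_right htail _)
  rw [show (N : ℝ) - k - k = N - 2 * k by ring, ← ENNReal.ofReal_mul hC,
    Real.enorm_eq_ofReal_abs, ENNReal.ofReal_rpow_of_nonneg (abs_nonneg _) (by positivity)] at hE
  exact (ENNReal.ofReal_le_ofReal_iff (mul_nonneg hC (X1energy_nonneg N k v))).1 hE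

theorem rpow_mul_enorm_rpow_le_lintegral (hv : MemX1 N k v) (hk : 0 < k) (hN : 2 * k < N)
    {r : ℝ} (hr : r ∈ Ioo 0 1) :
    ENNReal.ofReal (r ^ ((N : ℝ) - 2 * k - 1)) * ‖v r‖ₑ ^ ((k : ℝ) + 1) ≤
      ENNReal.ofReal ((2 * k / ((N : ℝ) - 2 * k)) ^ (k : ℝ) * r ^ (((N : ℝ) - 2 * k) / 2 - 1)) *
        ∫⁻ s in Ioo r 1, ENNReal.ofReal (s ^ ((N : ℝ) / 2)) * ‖deriv v s‖ₑ ^ ((k : ℝ) + 1) := by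
  have hN' := cast_sub_two_mul_pos hN
  have hweight : r ^ ((N : ℝ) - 2 * k - 1) *
      (((k : ℝ) / ((N : ℝ) / 2 - k)) ^ (k : ℝ) * r ^ (-((N : ℝ) / 2 - k))) =
        (2 * k / ((N : ℝ) - 2 * k)) ^ (k : ℝ) * r ^ (((N : ℝ) - 2 * k) / 2 - 1) := by
    rw [show (k : ℝ) / (N / 2 - k) = 2 * k / (N - 2 * k) by field_simp, mul_left_comm,
      ← rpow_add hr.1]
    ring_nf
  calc _ ≤ ENNReal.ofReal (r ^ ((N : ℝ) - 2 * k - 1)) *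
        (ENNReal.ofReal (((k : ℝ) / ((N : ℝ) / 2 - k)) ^ (k : ℝ) * r ^ (-((N : ℝ) / 2 - k))) *
          ∫⁻ s in Ioo r 1, ENNReal.ofReal (s ^ ((N : ℝ) / 2)) * ‖deriv v s‖ₑ ^ ((k : ℝ) + 1)) :=
        mul_le_mul_right (hv.enorm_rpow_le hk hN (by linarith) hr) _
    _ = _ := by rw [← mul_assoc, ← ENNReal.ofReal_mul (rpow_nonneg hr.1.le _), hweight]

/-- Hardy's inequality: integrate `rpow_mul_enorm_rpow_le_lintegral` over `r` and swap the order
of integration. -/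
theorem lintegral_rpow_mul_enorm_rpow_le (hv : MemX1 N k v) (hk : 0 < k) (hN : 2 * k < N) :
    ∫⁻ r in Ioo 0 1, ENNReal.ofReal (r ^ ((N : ℝ) - 2 * k - 1)) * ‖v r‖ₑ ^ ((k : ℝ) + 1) ≤
      ENNReal.ofReal ((2 * k / ((N : ℝ) - 2 * k)) ^ (k : ℝ) * (2 / ((N : ℝ) - 2 * k)) *
        X1energy N k v) := by
  have hN' := cast_sub_two_mul_pos hN
  set γ : ℝ := ((N : ℝ) - 2 * k) / 2 with hγ
  have hγpos : 0 < γ := by positivity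
  set C : ℝ := (2 * k / ((N : ℝ) - 2 * k)) ^ (k : ℝ)
  have hC0 : 0 ≤ C := rpow_nonneg (div_nonneg (by positivity) hN'.le) _
  set G : ℝ → ℝ≥0∞ := fun s => ENNReal.ofReal (s ^ ((N : ℝ) / 2)) * ‖deriv v s‖ₑ ^ ((k : ℝ) + 1)
  have hinner : ∀ s ∈ Ioo (0 : ℝ) 1, G s * ∫⁻ r in Ioo 0 s, ENNReal.ofReal (C * r ^ (γ - 1)) =
      ENNReal.ofReal (C / γ) *
        (ENNReal.ofReal (s ^ ((N : ℝ) - k)) * ‖deriv v s‖ₑ ^ ((k : ℝ) + 1)) := by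
    intro s hs
    simp_rw [ENNReal.ofReal_mul hC0]
    rw [lintegral_const_mul _ (by fun_prop), lintegral_Ioo_zero_rpow_sub_one hγpos hs.1.le]
    have hs0 := hs.1
    calc G s * (ENNReal.ofReal C * ENNReal.ofReal (s ^ γ / γ))
        = ENNReal.ofReal (s ^ ((N : ℝ) / 2) * (C * (s ^ γ / γ))) *
            ‖deriv v s‖ₑ ^ ((k : ℝ) + 1) := by
          rw [ENNReal.ofReal_mul (by positivity), ENNReal.ofReal_mul hC0]; ring
      _ = ENNReal.ofReal (C / γ * s ^ ((N : ℝ) - k)) * ‖deriv v s‖ₑ ^ ((k : ℝ) + 1) := by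
          congr 2
          rw [mul_left_comm, mul_div_assoc', ← rpow_add hs0, hγ]
          ring_nf
      _ = _ := by rw [ENNReal.ofReal_mul (div_nonneg hC0 hγpos.le), mul_assoc]
  calc _ ≤ ∫⁻ r in Ioo 0 1, ENNReal.ofReal (C * r ^ (γ - 1)) * ∫⁻ s in Ioo r 1, G s :=
        setLIntegral_mono' measurableSet_Ioo fun r hr =>
          hv.rpow_mul_enorm_rpow_le_lintegral hk hN hr
    _ = ∫⁻ s in Ioo 0 1, G s * ∫⁻ r in Ioo 0 s, ENNReal.ofReal (C * r ^ (γ - 1)) :=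
        lintegral_Ioo_mul_lintegral_Ioo_swap (by fun_prop) (by fun_prop)
    _ = ENNReal.ofReal (C / γ) * ENNReal.ofReal (X1energy N k v) := by
        rw [setLIntegral_congr_fun measurableSet_Ioo hinner, lintegral_const_mul _ (by fun_prop),
          hv.lintegral_deriv_eq]
    _ = _ := by
        rw [← ENNReal.ofReal_mul (div_nonneg hC0 hγpos.le), hγ, div_div_eq_mul_div, mul_div_assoc]

theorem abs_le_mul_rpow_neg (hv : MemX1 N k v) (hk : 0 < k) (hN : 2 * k < N) {c r : ℝ}
    (hc : 0 ≤ c)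
    (hcE : (k / ((N : ℝ) - 2 * k)) ^ (k : ℝ) * X1energy N k v ≤ c ^ ((k : ℝ) + 1))
    (hr : r ∈ Ioo 0 1) : |v r| ≤ c * r ^ (-(((N : ℝ) - 2 * k) / (k + 1))) := by
  have hk1 : (0 : ℝ) < k + 1 := by positivity
  have hr0 := hr.1
  refine (rpow_le_rpow_iff (abs_nonneg _) (by positivity) hk1).1 ?_
  calc |v r| ^ ((k : ℝ) + 1)
      ≤ (k / ((N : ℝ) - 2 * k)) ^ (k : ℝ) * X1energy N k v * r ^ (-((N : ℝ) - 2 * k)) := by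
        rw [mul_right_comm]; exact hv.abs_rpow_le hk hN hr
    _ ≤ c ^ ((k : ℝ) + 1) * r ^ (-((N : ℝ) - 2 * k)) := by gcongr
    _ = (c * r ^ (-(((N : ℝ) - 2 * k) / (k + 1)))) ^ ((k : ℝ) + 1) := by
        rw [mul_rpow hc (by positivity), ← rpow_mul hr0.le]
        congr 2
        field_simp

theorem rpow_mul_abs_div_rpow_le (hv : MemX1 N k v) (hk : 0 < k) (hN : 2 * k < N) {α c r : ℝ}
    (hα : 0 < α) (hc : 0 ≤ c)
    (hcE : (k / ((N : ℝ) - 2 * k)) ^ (k : ℝ) * X1energy N k v ≤ c ^ ((k : ℝ) + 1))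
    (hr : r ∈ Ioo 0 1) :
    r ^ ((N : ℝ) - 1) * (|v r| / c) ^ (kstar N k + r ^ α) ≤
      exp ((N - 2 * k) / (k + 1) / α) / c ^ ((k : ℝ) + 1) *
        (r ^ ((N : ℝ) - 2 * k - 1) * |v r| ^ ((k : ℝ) + 1)) := by
  have hN' := cast_sub_two_mul_pos hN
  have hr0 := hr.1
  have hρ : |v r| / c ≤ r ^ (-(((N : ℝ) - 2 * k) / (k + 1))) :=
    div_le_of_le_mul₀ hc (by positivity) (by
      rw [mul_comm]; exact hv.abs_le_mul_rpow_neg hk hN hc hcE hr)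
  have hkstar : ((N : ℝ) - 2 * k) / (k + 1) * (kstar N k - (k + 1)) = 2 * k := by
    rw [kstar]; field_simp; ring
  have hkk : (k : ℝ) + 1 ≤ kstar N k := by
    rw [kstar, le_div_iff₀ hN']; nlinarith [k.cast_nonneg (α := ℝ)]
  have hsuper := rpow_add_rpow_le_exp_mul (p := k + 1) hr0 (by positivity) hα (by positivity)
    hkk (by positivity) hρ
  rw [hkstar] at hsuper
  calc r ^ ((N : ℝ) - 1) * (|v r| / c) ^ (kstar N k + r ^ α)
      ≤ r ^ ((N : ℝ) - 1) * (exp ((N - 2 * k) / (k + 1) / α) * r ^ (-(2 * k : ℝ)) *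
          (|v r| / c) ^ ((k : ℝ) + 1)) := by gcongr
    _ = _ := by
      rw [div_rpow (abs_nonneg _) hc, show (N : ℝ) - 2 * k - 1 = N - 1 + -(2 * k) by ring,
        rpow_add hr0]
      ring

theorem integral_div_le (hv : MemX1 N k v) (hk : 0 < k) (hN : 2 * k < N) {α c : ℝ} (hα : 0 < α)
    (hc : 0 ≤ c)
    (hcE : (k / ((N : ℝ) - 2 * k)) ^ (k : ℝ) * X1energy N k v ≤ c ^ ((k : ℝ) + 1)) :
    ∫ r in Ioo (0 : ℝ) 1, r ^ ((N : ℝ) - 1) * (|v r| / c) ^ (kstar N k + r ^ α) ≤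
      exp ((N - 2 * k) / (k + 1) / α) / c ^ ((k : ℝ) + 1) *
        ((2 * k / ((N : ℝ) - 2 * k)) ^ (k : ℝ) * (2 / ((N : ℝ) - 2 * k)) * X1energy N k v) := by
  have hN' := cast_sub_two_mul_pos hN
  set K : ℝ := exp ((N - 2 * k) / (k + 1) / α) / c ^ ((k : ℝ) + 1)
  have hK0 : 0 ≤ K := div_nonneg (exp_pos _).le (rpow_nonneg hc _)
  have hlint : ∫⁻ r in Ioo (0 : ℝ) 1,
      ENNReal.ofReal ‖r ^ ((N : ℝ) - 1) * (|v r| / c) ^ (kstar N k + r ^ α)‖ ≤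
        ENNReal.ofReal K * ENNReal.ofReal ((2 * k / ((N : ℝ) - 2 * k)) ^ (k : ℝ) *
          (2 / ((N : ℝ) - 2 * k)) * X1energy N k v) := by
    calc _ ≤ ∫⁻ r in Ioo (0 : ℝ) 1, ENNReal.ofReal K *
          (ENNReal.ofReal (r ^ ((N : ℝ) - 2 * k - 1)) * ‖v r‖ₑ ^ ((k : ℝ) + 1)) := by
          refine setLIntegral_mono' measurableSet_Ioo fun r hr => ?_
          have hr0 := hr.1
          rw [Real.enorm_eq_ofReal_abs, ENNReal.ofReal_rpow_of_nonneg (abs_nonneg _)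
            (by positivity), ← ENNReal.ofReal_mul (by positivity), ← ENNReal.ofReal_mul hK0,
            norm_of_nonneg (by positivity)]
          exact ENNReal.ofReal_le_ofReal (hv.rpow_mul_abs_div_rpow_le hk hN hα hc hcE hr)
      _ ≤ _ := by
          rw [lintegral_const_mul' _ _ ENNReal.ofReal_ne_top]
          exact mul_le_mul_right (hv.lintegral_rpow_mul_enorm_rpow_le hk hN) _
  -- going through `‖∫ f‖ ≤ ∫⁻ ‖f‖` spares proving that the integrand is integrable
  calc _ ≤ ‖∫ r in Ioo (0 : ℝ) 1, r ^ ((N : ℝ) - 1) * (|v r| / c) ^ (kstar N k + r ^ α)‖ :=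
        le_norm_self _
    _ ≤ _ := (norm_integral_le_lintegral_norm _).trans (ENNReal.toReal_mono (by finiteness) hlint)
    _ = _ := by
        rw [← ENNReal.ofReal_mul hK0, ENNReal.toReal_ofReal (mul_nonneg hK0 (by
          have := X1energy_nonneg N k v; positivity))]

theorem integral_div_mul_X1norm_le (hv : MemX1 N k v) (hk : 0 < k) (hN : 2 * k < N) {α lam : ℝ}
    (hα : 0 < α) (hlam : 0 ≤ lam)
    (hL : (k / ((N : ℝ) - 2 * k)) ^ (k : ℝ) ≤ lam ^ ((k : ℝ) + 1) * omegaNk N k) :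
    ∫ r in Ioo (0 : ℝ) 1, r ^ ((N : ℝ) - 1) * (|v r| / (lam * X1norm N k v)) ^ (kstar N k + r ^ α)
      ≤ exp ((N - 2 * k) / (k + 1) / α) *
          ((2 * k / ((N : ℝ) - 2 * k)) ^ (k : ℝ) * (2 / ((N : ℝ) - 2 * k))) /
        (lam ^ ((k : ℝ) + 1) * omegaNk N k) := by
  have hω := omegaNk_pos (N := N) (k := k) (by omega) (by omega)
  have hE := X1energy_nonneg N k v
  have hc : (lam * X1norm N k v) ^ ((k : ℝ) + 1) =
      lam ^ ((k : ℝ) + 1) * omegaNk N k * X1energy N k v := by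
    rw [X1norm_eq, mul_rpow hlam (by positivity), ← rpow_mul (by positivity),
      one_div_mul_cancel (by positivity), rpow_one, mul_assoc]
  have hint := hv.integral_div_le (c := lam * X1norm N k v) hk hN hα
    (by rw [X1norm_eq]; positivity) (by rw [hc]; gcongr)
  refine hint.trans ?_
  rw [hc]
  rcases hE.eq_or_lt with hE0 | hEpos
  · -- zero energy forces `c = 0`, and the bound of `integral_div_le` is `0` through `x / 0 = 0`
    have hN' := cast_sub_two_mul_pos hN
    rw [← hE0, mul_zero, mul_zero, div_zero, zero_mul]
    positivity
  · exact le_of_eq (by field_simp)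

end MemX1

/-- **Corollary 1 (radial form).** There is `λ* > 0` such that for every nonzero
`v ∈ X_1`, `ω_{N-1} ∫_0^1 r^{N-1} (|v(r)|/(λ* ‖v‖_{X_1}))^{k*+r^α} dr ≤ 1`;
i.e. the Luxemburg norm of `u(x) = -v(|x|)` in `L_{k*+|x|^α}(B)` is `≤ λ* ‖v‖_{X_1}`. -/
theorem coro1_radial (N k : ℕ) (hk : 1 ≤ k) (hN : 2 * k < N) (α : ℝ) (hα : 0 < α) :
    ∃ lam : ℝ, 0 < lam ∧ ∀ v : ℝ → ℝ, MemX1 N k v → v ≠ 0 →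
      omegaSphere N *
        ∫ r in Set.Ioo (0:ℝ) 1,
          r ^ ((N : ℝ) - 1) *
            (|v r| / (lam * X1norm N k v)) ^ (kstar N k + r ^ α) ≤ 1 := by
  have hN' := cast_sub_two_mul_pos hN
  have hω := omegaNk_pos (N := N) (k := k) (by omega) (by omega)
  set A := exp ((N - 2 * k) / (k + 1) / α) *
    ((2 * k / ((N : ℝ) - 2 * k)) ^ (k : ℝ) * (2 / ((N : ℝ) - 2 * k)))
  set L := max ((k / ((N : ℝ) - 2 * k)) ^ (k : ℝ)) (omegaSphere N * A)
  have hL : 0 < L := lt_max_of_lt_left (by positivity)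
  set lam := (L / omegaNk N k) ^ (1 / ((k : ℝ) + 1))
  have hlam : lam ^ ((k : ℝ) + 1) * omegaNk N k = L := by
    rw [← rpow_mul (by positivity), one_div_mul_cancel (by positivity), rpow_one,
      div_mul_cancel₀ _ hω.ne']
  refine ⟨lam, by positivity, fun v hv _ => ?_⟩
  have hint := hv.integral_div_mul_X1norm_le (lam := lam) (by omega) hN hα (by positivity)
    (hlam ▸ le_max_left _ _)
  rw [hlam] at hint
  calc _ ≤ omegaSphere N * (A / L) := by gcongr; exact (omegaSphere_pos (by omega)).le
    _ ≤ 1 := by rw [← mul_div_assoc, div_le_one hL]; exact le_max_right _ _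
end

section
/- (Sharp instanton integral asymptotics, subcritical weight case.) Let β, δ be real numbers with 0 ≤ β < N/k, δ ≥ 0, and let γ ∈ (0,1). Then the integral J = ∫_0^∞ s^{N+β−1}(log(1+s²))^δ (1+s²)^{−(k+1)N/(2k)} ds is finite and lim_{ε→0⁺} ε^{−β} ∫_0^{ε^γ} r^{N+β−1} (v*_ε(r))^{k*} (log(1 + r²/ε²))^δ dr = ĉ^{k*} J. -/
open MeasureTheory Real Set Filter Asymptotics

open Topology

/-!
Substituting `r = ε s` gives `v*_ε(ε s)^{k*} = ε^{-N} ĉ^{k*} (1 + s²)^{-(k+1)N/(2k)}` and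
`log (1 + r²/ε²) = log (1 + s²)`, so the normalised integral is exactly `ĉ^{k*}` times the
integral of the `J`-integrand over `(0, ε^{γ-1})`; as `γ < 1` the upper limit tends to `∞`.
The integral `J` converges because its integrand is `O(s^{N+β-1})` at `0` and, the logarithm
costing only an arbitrarily small power, `O(s^{β-N/k-1+η})` for every `η > 0` at `∞`.
-/

section LogWeightIntegrability

variable {a δ p : ℝ}

lemma integrableOn_Ioc_rpow_mul_log_one_add_sq_rpow (ha : -1 < a) (hδ : 0 ≤ δ) (hp : 0 ≤ p) :
    IntegrableOn (fun s : ℝ => s ^ a * log (1 + s ^ 2) ^ δ * (1 + s ^ 2) ^ (-p)) (Ioc 0 1) := by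
  have hdom : IntegrableOn (fun s : ℝ => s ^ a) (Ioc 0 1) :=
    (integrableOn_Ioc_iff_integrableOn_Ioo (f := fun s : ℝ => s ^ a)).2
      ((intervalIntegral.integrableOn_Ioo_rpow_iff one_pos).2 ha)
  refine hdom.mono' (by fun_prop) ?_
  filter_upwards [ae_restrict_mem measurableSet_Ioc] with s ⟨hs0, hs1⟩
  have hlog0 : 0 ≤ log (1 + s ^ 2) := log_nonneg (by nlinarith)
  have hlog1 : log (1 + s ^ 2) ≤ 1 := by
    linarith [log_le_sub_one_of_pos (show 0 < 1 + s ^ 2 by positivity),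
      pow_le_one₀ hs0.le hs1 (n := 2)]
  have hpow : (1 + s ^ 2) ^ (-p) ≤ 1 :=
    rpow_le_one_of_one_le_of_nonpos (by nlinarith) (by linarith)
  rw [norm_of_nonneg (by positivity)]
  calc s ^ a * log (1 + s ^ 2) ^ δ * (1 + s ^ 2) ^ (-p) ≤ s ^ a * 1 * 1 := by
        gcongr
        · exact rpow_le_one hlog0 hlog1 hδ
    _ = s ^ a := by ring

lemma rpow_mul_log_one_add_sq_rpow_le {α s : ℝ} (hα : 0 < α) (hδ : 0 ≤ δ) (hαδp : α * δ ≤ p)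
    (hs : 1 ≤ s) :
    s ^ a * log (1 + s ^ 2) ^ δ * (1 + s ^ 2) ^ (-p) ≤ α ^ (-δ) * s ^ (a + 2 * (α * δ - p)) := by
  have hs0 : 0 < s := by linarith
  have hx : 0 < 1 + s ^ 2 := by positivity
  have hlog : log (1 + s ^ 2) ^ δ ≤ α ^ (-δ) * (1 + s ^ 2) ^ (α * δ) := by
    calc log (1 + s ^ 2) ^ δ ≤ ((1 + s ^ 2) ^ α / α) ^ δ :=
          rpow_le_rpow (log_nonneg (by nlinarith)) (log_le_rpow_div hx.le hα) hδ
      _ = α ^ (-δ) * (1 + s ^ 2) ^ (α * δ) := by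
          rw [div_rpow (by positivity) hα.le, ← rpow_mul hx.le, rpow_neg hα.le, div_eq_inv_mul]
  have hsq : (1 + s ^ 2) ^ (α * δ - p) ≤ s ^ (2 * (α * δ - p)) := by
    rw [rpow_mul hs0.le, rpow_two]
    exact rpow_le_rpow_of_nonpos (by positivity) (by linarith) (by linarith)
  calc s ^ a * log (1 + s ^ 2) ^ δ * (1 + s ^ 2) ^ (-p)
      ≤ s ^ a * (α ^ (-δ) * (1 + s ^ 2) ^ (α * δ)) * (1 + s ^ 2) ^ (-p) := by gcongr
    _ = α ^ (-δ) * (s ^ a * (1 + s ^ 2) ^ (α * δ - p)) := by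
        rw [sub_eq_add_neg, rpow_add hx]; ring
    _ ≤ α ^ (-δ) * (s ^ a * s ^ (2 * (α * δ - p))) := by gcongr
    _ = α ^ (-δ) * s ^ (a + 2 * (α * δ - p)) := by rw [rpow_add hs0]

lemma integrableOn_Ioi_one_rpow_mul_log_one_add_sq_rpow (ha : -1 < a) (hδ : 0 ≤ δ)
    (hp : a + 1 < 2 * p) :
    IntegrableOn (fun s : ℝ => s ^ a * log (1 + s ^ 2) ^ δ * (1 + s ^ 2) ^ (-p)) (Ioi 1) := by
  -- chosen so that `a + 2αδ - 2p < -1`, making the dominating power integrable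
  set α := (2 * p - a - 1) / (4 * (δ + 1)) with hα_def
  have hα : 0 < α := div_pos (by linarith) (by positivity)
  have hαδ : 2 * (α * δ) ≤ (2 * p - a - 1) / 2 := by
    rw [hα_def, div_mul_eq_mul_div, mul_div_assoc', div_le_div_iff₀ (by positivity) two_pos]
    nlinarith
  have hdom : IntegrableOn (fun s : ℝ => α ^ (-δ) * s ^ (a + 2 * (α * δ - p))) (Ioi 1) :=
    (integrableOn_Ioi_rpow_of_lt (by linarith) one_pos).const_mul _
  refine hdom.mono' (by fun_prop) ?_
  filter_upwards [ae_restrict_mem measurableSet_Ioi] with s (hs : 1 < s)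
  have hlog : 0 ≤ log (1 + s ^ 2) := log_nonneg (by nlinarith)
  rw [norm_of_nonneg (by positivity)]
  exact rpow_mul_log_one_add_sq_rpow_le hα hδ (by linarith) hs.le

lemma integrableOn_Ioi_rpow_mul_log_one_add_sq_rpow (ha : -1 < a) (hδ : 0 ≤ δ)
    (hp : a + 1 < 2 * p) :
    IntegrableOn (fun s : ℝ => s ^ a * log (1 + s ^ 2) ^ δ * (1 + s ^ 2) ^ (-p)) (Ioi 0) := by
  rw [← Ioc_union_Ioi_eq_Ioi zero_le_one]
  exact (integrableOn_Ioc_rpow_mul_log_one_add_sq_rpow ha hδ (by linarith)).union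
    (integrableOn_Ioi_one_rpow_mul_log_one_add_sq_rpow ha hδ hp)

end LogWeightIntegrability

section InstantonScaling

variable {N k : ℕ}

lemma chat_nonneg (hN : 2 * k ≤ N) : 0 ≤ chat N k := by
  have hNk : 2 * (k : ℝ) ≤ N := by exact_mod_cast hN
  unfold chat
  have : 0 ≤ ((N : ℝ) - 2 * k) / k := div_nonneg (by linarith) k.cast_nonneg
  positivity

lemma vstar_one_nonneg (hN : 2 * k ≤ N) (r : ℝ) : 0 ≤ vstar N k 1 r := by
  have := chat_nonneg hN
  unfold vstar
  positivity

lemma vstar_mul_right_eq {ε : ℝ} (hk : k ≠ 0) (hε : 0 < ε) (s : ℝ) :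
    vstar N k ε (ε * s) = ε ^ (-(((N : ℝ) - 2 * k) / (k + 1))) * vstar N k 1 s := by
  have hk' : (k : ℝ) ≠ 0 := by exact_mod_cast hk
  have hsplit : ε ^ ((2 : ℝ) / (k + 1)) / (ε ^ 2 + (ε * s) ^ 2)
      = ε ^ ((2 : ℝ) / (k + 1) - 2) * (1 ^ ((2 : ℝ) / (k + 1)) / (1 ^ 2 + s ^ 2)) := by
    rw [rpow_sub hε, rpow_two, one_rpow]
    field_simp
  rw [vstar, vstar, hsplit, mul_rpow (by positivity) (by positivity), ← rpow_mul hε.le]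
  have hexp : ((2 : ℝ) / (k + 1) - 2) * (((N : ℝ) - 2 * k) / (2 * k))
      = -(((N : ℝ) - 2 * k) / (k + 1)) := by
    field_simp
    ring
  rw [hexp]
  ring

lemma vstar_one_rpow_kstar (hk : k ≠ 0) (hN : 2 * k < N) (s : ℝ) :
    vstar N k 1 s ^ kstar N k
      = chat N k ^ kstar N k * (1 + s ^ 2) ^ (-(((k : ℝ) + 1) * N / (2 * k))) := by
  have hk' : (k : ℝ) ≠ 0 := by exact_mod_cast hk
  have hNk : (N : ℝ) - 2 * k ≠ 0 := by
    have : 2 * (k : ℝ) < N := by exact_mod_cast hN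
    linarith
  have hx : 0 < 1 + s ^ 2 := by positivity
  rw [vstar, one_rpow, one_pow, one_div, inv_rpow hx.le,
    mul_rpow (chat_nonneg hN.le) (by positivity), ← rpow_neg hx.le, ← rpow_mul hx.le, kstar]
  congr 2
  field_simp

lemma vstar_mul_right_rpow_kstar {ε : ℝ} (hk : k ≠ 0) (hN : 2 * k < N) (hε : 0 < ε) (s : ℝ) :
    vstar N k ε (ε * s) ^ kstar N k
      = ε ^ (-(N : ℝ)) * chat N k ^ kstar N k *
          (1 + s ^ 2) ^ (-(((k : ℝ) + 1) * N / (2 * k))) := by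
  have hNk : (N : ℝ) - 2 * k ≠ 0 := by
    have : 2 * (k : ℝ) < N := by exact_mod_cast hN
    linarith
  rw [vstar_mul_right_eq hk hε, mul_rpow (by positivity) (vstar_one_nonneg hN.le s),
    ← rpow_mul hε.le, vstar_one_rpow_kstar hk hN, kstar, mul_assoc]
  congr 2
  field_simp

lemma instanton_integrand_mul_right (hk : k ≠ 0) (hN : 2 * k < N) (β δ : ℝ) {ε s : ℝ}
    (hε : 0 < ε) (hs : 0 ≤ s) :
    (ε * s) ^ ((N : ℝ) + β - 1) * vstar N k ε (ε * s) ^ kstar N k *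
        log (1 + (ε * s) ^ 2 / ε ^ 2) ^ δ
      = ε ^ (β - 1) * (chat N k ^ kstar N k * (s ^ ((N : ℝ) + β - 1) * log (1 + s ^ 2) ^ δ *
          (1 + s ^ 2) ^ (-(((k : ℝ) + 1) * N / (2 * k))))) := by
  have hlog : 1 + (ε * s) ^ 2 / ε ^ 2 = 1 + s ^ 2 := by field_simp
  have hpow : ε ^ (β - 1) = ε ^ ((N : ℝ) + β - 1) * ε ^ (-(N : ℝ)) := by
    rw [← rpow_add hε]; ring_nf
  rw [hlog, mul_rpow hε.le hs, vstar_mul_right_rpow_kstar hk hN hε, hpow]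
  ring

lemma integral_instanton_Ioo_mul_right (hk : k ≠ 0) (hN : 2 * k < N) (β δ : ℝ)
    {ε T : ℝ} (hε : 0 < ε) (hT : 0 ≤ T) :
    ∫ r in Ioo 0 (ε * T), r ^ ((N : ℝ) + β - 1) * vstar N k ε r ^ kstar N k *
        log (1 + r ^ 2 / ε ^ 2) ^ δ
      = ε ^ β * (chat N k ^ kstar N k * ∫ s in (0 : ℝ)..T, s ^ ((N : ℝ) + β - 1) *
          log (1 + s ^ 2) ^ δ * (1 + s ^ 2) ^ (-(((k : ℝ) + 1) * N / (2 * k)))) := by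
  rw [← integral_Ioc_eq_integral_Ioo, ← intervalIntegral.integral_of_le (by positivity)]
  conv_lhs => rw [← mul_zero ε, ← intervalIntegral.smul_integral_comp_mul_left]
  rw [smul_eq_mul,
    intervalIntegral.integral_congr (g := fun s => ε ^ (β - 1) * (chat N k ^ kstar N k *
      (s ^ ((N : ℝ) + β - 1) * log (1 + s ^ 2) ^ δ *
        (1 + s ^ 2) ^ (-(((k : ℝ) + 1) * N / (2 * k))))))
      fun s hs => instanton_integrand_mul_right hk hN β δ hε (uIcc_of_le hT ▸ hs).1,
    intervalIntegral.integral_const_mul, intervalIntegral.integral_const_mul, ← mul_assoc,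
    mul_comm ε, ← rpow_add_one hε.ne', sub_add_cancel]

end InstantonScaling

/-- **Sharp instanton integral asymptotics, subcritical weight case `β < N/k`.**
The limit integral `J` is finite and
`ε^{-β} ∫_0^{ε^γ} r^{N+β-1} (v*_ε)^{k*} (log(1+r²/ε²))^δ dr → ĉ^{k*} J` as `ε → 0⁺`. -/
theorem instanton_subcritical (N k : ℕ) (hk : 1 ≤ k) (hN : 2 * k < N)
    (β δ γ : ℝ) (hβ0 : 0 ≤ β) (hβ : β < (N : ℝ) / (k : ℝ)) (hδ : 0 ≤ δ)
    (hγ : γ ∈ Set.Ioo (0:ℝ) 1) :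
    MeasureTheory.IntegrableOn
      (fun s : ℝ => s ^ ((N : ℝ) + β - 1) * Real.log (1 + s ^ 2) ^ δ *
        (1 + s ^ 2) ^ (-(((k : ℝ) + 1) * (N : ℝ) / (2 * (k : ℝ))))) (Set.Ioi 0) ∧
    Filter.Tendsto
      (fun ε : ℝ => ε ^ (-β) *
        ∫ r in Set.Ioo (0:ℝ) (ε ^ γ),
          r ^ ((N : ℝ) + β - 1) * vstar N k ε r ^ kstar N k *
            Real.log (1 + r ^ 2 / ε ^ 2) ^ δ)
      (nhdsWithin 0 (Set.Ioi 0))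
      (nhds (chat N k ^ kstar N k *
        ∫ s in Set.Ioi (0:ℝ),
          s ^ ((N : ℝ) + β - 1) * Real.log (1 + s ^ 2) ^ δ *
            (1 + s ^ 2) ^ (-(((k : ℝ) + 1) * (N : ℝ) / (2 * (k : ℝ)))))) := by
  have hk0 : k ≠ 0 := by omega
  have hNR : (1 : ℝ) ≤ N := by exact_mod_cast (show 1 ≤ N by omega)
  have hp : 2 * (((k : ℝ) + 1) * N / (2 * k)) = N + N / k := by field_simp
  have hJ := integrableOn_Ioi_rpow_mul_log_one_add_sq_rpow (a := (N : ℝ) + β - 1)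
    (p := ((k : ℝ) + 1) * N / (2 * k)) (by linarith) hδ (by linarith)
  refine ⟨hJ, ?_⟩
  have hcut : Tendsto (fun ε : ℝ => ε ^ (γ - 1)) (𝓝[>] 0) atTop :=
    tendsto_rpow_neg_nhdsGT_zero (by linarith [hγ.2])
  refine ((intervalIntegral_tendsto_integral_Ioi 0 hJ hcut).const_mul _).congr' ?_
  filter_upwards [self_mem_nhdsWithin] with ε (hε : 0 < ε)
  have hεγ : ε ^ γ = ε * ε ^ (γ - 1) := by rw [mul_comm, ← rpow_add_one hε.ne', sub_add_cancel]
  rw [hεγ, integral_instanton_Ioo_mul_right hk0 hN β δ hε (by positivity), ← mul_assoc,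
    ← rpow_add hε, neg_add_cancel, rpow_zero, one_mul]
end

section
/- (Sharp instanton integral asymptotics, critical weight case.) Let δ ≥ 0 be a real number and γ ∈ (0,1). Then, with β = N/k, lim_{ε→0⁺} [ε^{N/k} (−log ε)^{δ+1}]^{−1} ∫_0^{ε^γ} r^{N+β−1} (v*_ε(r))^{k*} (log(1 + r²/ε²))^δ dr = ĉ^{k*} (2(1−γ))^{δ+1} / (2(δ+1)). -/
open MeasureTheory Real Set Filter Asymptotics

/-!
The substitution `r = ε s` turns the integral into
`ĉ^{k*} ε^{N/k} ∫_0^T s^{2m-1} (1+s²)^{-m} log(1+s²)^δ ds` with `T = ε^{γ-1}` and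
`m = N(k+1)/(2k) ≥ 2`. This profile differs from `s/(1+s²) · log(1+s²)^δ`, the derivative of
`log(1+s²)^{δ+1}/(2(δ+1))`, by `O((1+s²)^{-5/4})`, which is integrable on `(0,∞)`. Hence the
integral up to `T` is `log(1+T²)^{δ+1}/(2(δ+1)) + O(1) ~ (2 log T)^{δ+1}/(2(δ+1))`, and
`log T = (1-γ)(-log ε)`.
-/

open Topology

noncomputable def logDensity (δ s : ℝ) : ℝ := s / (1 + s ^ 2) * log (1 + s ^ 2) ^ δ

/-- The substitution `r = ε s` turns the integrand of `instanton_critical` into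
`ĉ^{k*} ε^{N/k - 1}` times this profile, with `m = N(k+1)/(2k)`. -/
noncomputable def bubbleProfile (m δ s : ℝ) : ℝ :=
  s ^ (2 * m - 1) * (1 + s ^ 2) ^ (-m) * log (1 + s ^ 2) ^ δ

section BubbleProfile

variable {m δ : ℝ}

lemma continuous_log_one_add_sq : Continuous fun s : ℝ => log (1 + s ^ 2) :=
  (continuous_const.add (continuous_pow 2)).log fun s => (by positivity : (1 : ℝ) + s ^ 2 ≠ 0)

lemma continuous_logDensity (hδ : 0 ≤ δ) : Continuous (logDensity δ) :=
  (continuous_id.div (continuous_const.add (continuous_pow 2))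
    fun s => (by positivity : (1 : ℝ) + s ^ 2 ≠ 0)).mul
    (continuous_log_one_add_sq.rpow_const fun _ => Or.inr hδ)

lemma continuous_bubbleProfile (hm : 1 / 2 ≤ m) (hδ : 0 ≤ δ) :
    Continuous (bubbleProfile m δ) :=
  ((continuous_id.rpow_const fun _ => Or.inr (by linarith)).mul
    ((continuous_const.add (continuous_pow 2)).rpow_const
      fun s => Or.inl (by positivity : (1 : ℝ) + s ^ 2 ≠ 0))).mul
    (continuous_log_one_add_sq.rpow_const fun _ => Or.inr hδ)

lemma hasDerivAt_log_one_add_sq_rpow (hδ : 0 ≤ δ) (s : ℝ) :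
    HasDerivAt (fun s => log (1 + s ^ 2) ^ (δ + 1) / (2 * (δ + 1))) (logDensity δ s) s := by
  have hlog : HasDerivAt (fun s : ℝ => log (1 + s ^ 2)) (2 * s / (1 + s ^ 2)) s := by
    simpa using ((hasDerivAt_pow 2 s).const_add 1).log (by positivity)
  refine ((hlog.rpow_const (p := δ + 1) (Or.inr (by linarith))).div_const
    (2 * (δ + 1))).congr_deriv ?_
  rw [logDensity, add_sub_cancel_right]
  field_simp

lemma integral_logDensity (hδ : 0 ≤ δ) (T : ℝ) :
    ∫ s in 0..T, logDensity δ s = log (1 + T ^ 2) ^ (δ + 1) / (2 * (δ + 1)) := by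
  rw [intervalIntegral.integral_eq_sub_of_hasDerivAt
    (fun s _ => hasDerivAt_log_one_add_sq_rpow hδ s)
    ((continuous_logDensity hδ).intervalIntegrable _ _)]
  simp [zero_rpow (by linarith : δ + 1 ≠ 0)]

lemma tendsto_log_one_add_sq_div_log :
    Tendsto (fun T => log (1 + T ^ 2) / log T) atTop (𝓝 2) := by
  have hsmall : Tendsto (fun T : ℝ => log (1 + T⁻¹ ^ 2)) atTop (𝓝 0) := by
    simpa [Function.comp_def] using
      (continuous_log_one_add_sq.tendsto 0).comp tendsto_inv_atTop_zero
  have hlim := (hsmall.div_atTop tendsto_log_atTop).const_add 2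
  rw [add_zero] at hlim
  refine hlim.congr' ?_
  filter_upwards [eventually_gt_atTop 1] with T hT
  have hlogT : log T ≠ 0 := (log_pos hT).ne'
  have hsplit : log (1 + T ^ 2) = 2 * log T + log (1 + T⁻¹ ^ 2) := by
    rw [show 2 * log T = log (T ^ 2) by simp [log_pow],
      ← log_mul (by positivity) (by positivity)]
    congr 1
    field_simp
    ring
  rw [hsplit]
  field_simp

lemma one_sub_rpow_le_mul_one_sub {x p : ℝ} (hx : 0 ≤ x) (hp : 1 ≤ p) :
    1 - x ^ p ≤ p * (1 - x) := by
  have h := one_add_mul_self_le_rpow_one_add (s := x - 1) (by linarith) hp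
  rw [add_sub_cancel] at h
  linarith

lemma log_rpow_le_mul_rpow_quarter {x : ℝ} (hx : 1 ≤ x) (hδ : 0 ≤ δ) :
    log x ^ δ ≤ (4 * (δ + 1)) ^ δ * x ^ (1 / 4 : ℝ) := by
  set q : ℝ := (4 * (δ + 1))⁻¹
  have hq : 0 < q := by positivity
  have hlog : log x ≤ 4 * (δ + 1) * x ^ q := by
    simpa [q, div_eq_mul_inv, mul_comm] using log_le_rpow_div (by linarith) hq
  calc log x ^ δ ≤ (4 * (δ + 1) * x ^ q) ^ δ := rpow_le_rpow (log_nonneg hx) hlog hδ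
    _ = (4 * (δ + 1)) ^ δ * x ^ (q * δ) := by
        rw [mul_rpow (by positivity) (by positivity), ← rpow_mul (by linarith)]
    _ ≤ (4 * (δ + 1)) ^ δ * x ^ (1 / 4 : ℝ) := by
        gcongr
        rw [inv_mul_le_iff₀ (by positivity)]
        linarith

lemma div_one_add_sq_le (s : ℝ) : s / (1 + s ^ 2) ≤ (1 + s ^ 2) ^ (-(1 / 2) : ℝ) := by
  have hP : 0 < 1 + s ^ 2 := by positivity
  calc s / (1 + s ^ 2) ≤ (1 + s ^ 2) ^ (1 / 2 : ℝ) / (1 + s ^ 2) := by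
        gcongr
        rw [← sqrt_eq_rpow]
        exact (le_abs_self s).trans (abs_le_sqrt (by linarith))
    _ = (1 + s ^ 2) ^ (-(1 / 2) : ℝ) := by
        rw [← rpow_sub_one hP.ne']
        norm_num

lemma logDensity_nonneg {s : ℝ} (hs : 0 ≤ s) : 0 ≤ logDensity δ s :=
  mul_nonneg (by positivity) (rpow_nonneg (log_nonneg (by nlinarith)) δ)

lemma bubbleProfile_eq_logDensity_mul {s : ℝ} (hs : 0 < s) :
    bubbleProfile m δ s = logDensity δ s * (s ^ 2 / (1 + s ^ 2)) ^ (m - 1) := by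
  have hP : 0 < 1 + s ^ 2 := by positivity
  have hs' : s ^ (2 * m - 1) = s * (s ^ 2) ^ (m - 1) := by
    rw [show 2 * m - 1 = 1 + 2 * (m - 1) by ring, rpow_add hs, rpow_one, rpow_mul hs.le]
    norm_num
  have hP' : (1 + s ^ 2) ^ (-m) = (1 + s ^ 2)⁻¹ * ((1 + s ^ 2) ^ (m - 1))⁻¹ := by
    rw [← rpow_neg_one, ← rpow_neg hP.le, ← rpow_add hP]
    ring_nf
  rw [bubbleProfile, logDensity, hs', hP', div_rpow (sq_nonneg s) hP.le]
  ring

lemma sq_div_one_add_sq_rpow_le_one {p : ℝ} (hp : 0 ≤ p) (s : ℝ) :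
    (s ^ 2 / (1 + s ^ 2)) ^ p ≤ 1 :=
  rpow_le_one (by positivity) ((div_le_one (by positivity)).2 (by linarith)) hp

lemma bubbleProfile_le_logDensity (hm : 1 ≤ m) {s : ℝ} (hs : 0 < s) :
    bubbleProfile m δ s ≤ logDensity δ s := by
  rw [bubbleProfile_eq_logDensity_mul hs]
  exact mul_le_of_le_one_right (logDensity_nonneg hs.le)
    (sq_div_one_add_sq_rpow_le_one (by linarith) s)

lemma logDensity_sub_bubbleProfile_le (hm : 2 ≤ m) (hδ : 0 ≤ δ) {s : ℝ} (hs : 0 < s) :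
    logDensity δ s - bubbleProfile m δ s
      ≤ (m - 1) * (4 * (δ + 1)) ^ δ * (1 + s ^ 2) ^ (-(5 / 4) : ℝ) := by
  have hP : 0 < 1 + s ^ 2 := by positivity
  have hdefect : 1 - (s ^ 2 / (1 + s ^ 2)) ^ (m - 1) ≤ (m - 1) * (1 + s ^ 2)⁻¹ := by
    have h := one_sub_rpow_le_mul_one_sub (x := s ^ 2 / (1 + s ^ 2)) (by positivity)
      (by linarith : 1 ≤ m - 1)
    rwa [show 1 - s ^ 2 / (1 + s ^ 2) = (1 + s ^ 2)⁻¹ by field_simp; ring] at h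
  calc logDensity δ s - bubbleProfile m δ s
      = s / (1 + s ^ 2) * log (1 + s ^ 2) ^ δ * (1 - (s ^ 2 / (1 + s ^ 2)) ^ (m - 1)) := by
        rw [bubbleProfile_eq_logDensity_mul hs, logDensity]
        ring
    _ ≤ (1 + s ^ 2) ^ (-(1 / 2) : ℝ) * ((4 * (δ + 1)) ^ δ * (1 + s ^ 2) ^ (1 / 4 : ℝ))
          * ((m - 1) * (1 + s ^ 2)⁻¹) := by
        gcongr ?_ * ?_ * ?_
        · linarith [sq_div_one_add_sq_rpow_le_one (by linarith : 0 ≤ m - 1) s]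
        · exact rpow_nonneg (log_nonneg (by linarith [sq_nonneg s])) δ
        · exact div_one_add_sq_le s
        · exact log_rpow_le_mul_rpow_quarter (by linarith [sq_nonneg s]) hδ
    _ = (m - 1) * (4 * (δ + 1)) ^ δ * (1 + s ^ 2) ^ (-(5 / 4) : ℝ) := by
        rw [show (-(5 / 4) : ℝ) = -(1 / 2) + 1 / 4 + -1 by norm_num, rpow_add hP, rpow_add hP,
          rpow_neg_one]
        ring

lemma integrableOn_logDensity_sub_bubbleProfile (hm : 2 ≤ m) (hδ : 0 ≤ δ) :
    IntegrableOn (fun s => logDensity δ s - bubbleProfile m δ s) (Ioi 0) := by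
  have hdom : Integrable fun s : ℝ => (1 + ‖s‖ ^ 2) ^ (-(5 / 2) / 2 : ℝ) :=
    integrable_rpow_neg_one_add_norm_sq (by norm_num)
  refine (hdom.const_mul ((m - 1) * (4 * (δ + 1)) ^ δ)).integrableOn.mono'
    ((continuous_logDensity hδ).sub
      (continuous_bubbleProfile (by linarith) hδ)).aestronglyMeasurable ?_
  filter_upwards [ae_restrict_mem measurableSet_Ioi] with s (hs : 0 < s)
  rw [norm_of_nonneg (sub_nonneg.2 (bubbleProfile_le_logDensity (by linarith) hs)),
    norm_eq_abs, sq_abs]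
  convert logDensity_sub_bubbleProfile_le hm hδ hs using 3
  norm_num

theorem tendsto_integral_bubbleProfile_div_log_rpow (hm : 2 ≤ m) (hδ : 0 ≤ δ) :
    Tendsto (fun T => (∫ s in 0..T, bubbleProfile m δ s) / log T ^ (δ + 1)) atTop
      (𝓝 (2 ^ (δ + 1) / (2 * (δ + 1)))) := by
  have hlog : Tendsto (fun T => log T ^ (δ + 1)) atTop atTop :=
    (tendsto_rpow_atTop (by linarith)).comp tendsto_log_atTop
  have hprimitive : Tendsto (fun T => (log (1 + T ^ 2) / log T) ^ (δ + 1) / (2 * (δ + 1)))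
      atTop (𝓝 (2 ^ (δ + 1) / (2 * (δ + 1)))) :=
    (tendsto_log_one_add_sq_div_log.rpow_const (Or.inl two_ne_zero)).div_const _
  have hremainder : Tendsto
      (fun T => (∫ s in 0..T, (logDensity δ s - bubbleProfile m δ s)) / log T ^ (δ + 1))
      atTop (𝓝 0) :=
    (intervalIntegral_tendsto_integral_Ioi 0
      (integrableOn_logDensity_sub_bubbleProfile hm hδ) tendsto_id).div_atTop hlog
  refine (sub_zero (2 ^ (δ + 1) / (2 * (δ + 1)) : ℝ) ▸ hprimitive.sub hremainder).congr' ?_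
  filter_upwards [eventually_gt_atTop 1] with T hT
  rw [intervalIntegral.integral_sub ((continuous_logDensity hδ).intervalIntegrable _ _)
      ((continuous_bubbleProfile (by linarith) hδ).intervalIntegrable _ _),
    integral_logDensity hδ, div_rpow (log_nonneg (by nlinarith)) (log_nonneg hT.le)]
  ring

end BubbleProfile

section Instanton

variable {N k : ℕ}

lemma chat_pos (hk : 0 < k) (hN : 2 * k < N) : 0 < chat N k := by
  have hNk : (2 * k : ℝ) < N := by exact_mod_cast hN
  have hk' : (0 : ℝ) < k := by exact_mod_cast hk
  exact rpow_pos_of_pos (mul_pos (by linarith) (pow_pos (div_pos (by linarith) hk') k)) _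

lemma vstar_rpow_kstar (hk : 0 < k) (hN : 2 * k < N) {ε : ℝ} (hε : 0 < ε) (r : ℝ) :
    vstar N k ε r ^ kstar N k = chat N k ^ kstar N k * ε ^ ((N : ℝ) / k) *
      (ε ^ 2 + r ^ 2) ^ (-((N : ℝ) * (k + 1) / (2 * k))) := by
  have hNk : (N : ℝ) - 2 * k ≠ 0 := by
    have : (2 * k : ℝ) < N := by exact_mod_cast hN
    linarith
  have hk' : (k : ℝ) ≠ 0 := by exact_mod_cast hk.ne'
  have hB : 0 < ε ^ 2 + r ^ 2 := by positivity
  have hA : 0 < ε ^ ((2 : ℝ) / (k + 1)) := rpow_pos_of_pos hε _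
  rw [vstar, mul_rpow (chat_pos hk hN).le (by positivity), ← rpow_mul (by positivity),
    div_rpow hA.le hB.le, ← rpow_mul hε.le, div_eq_mul_inv, ← rpow_neg hB.le, mul_assoc]
  congr 3
  · unfold kstar
    field_simp
  · unfold kstar
    field_simp

lemma bubbleProfile_rescale {m δ ε s : ℝ} (hε : 0 < ε) (hs : 0 ≤ s) :
    (ε * s) ^ (2 * m - 1) * (ε ^ 2 + (ε * s) ^ 2) ^ (-m) * log (1 + (ε * s) ^ 2 / ε ^ 2) ^ δ
      = ε⁻¹ * bubbleProfile m δ s := by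
  have hP : 0 < 1 + s ^ 2 := by positivity
  rw [show ε ^ 2 + (ε * s) ^ 2 = ε ^ 2 * (1 + s ^ 2) by ring,
    show 1 + (ε * s) ^ 2 / ε ^ 2 = 1 + s ^ 2 by field_simp,
    mul_rpow hε.le hs, mul_rpow (by positivity) hP.le, ← rpow_natCast, ← rpow_mul hε.le,
    bubbleProfile, ← rpow_neg_one ε]
  have hε' : ε ^ (2 * m - 1) * ε ^ ((2 : ℕ) * -m : ℝ) = ε ^ (-1 : ℝ) := by
    rw [← rpow_add hε]
    push_cast
    ring_nf
  rw [← hε']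
  ring

lemma integral_instanton_eq (hk : 0 < k) (hN : 2 * k < N) (δ : ℝ) {ε T : ℝ} (hε : 0 < ε)
    (hT : 0 ≤ T) :
    ∫ r in Ioo 0 (ε * T),
        r ^ ((N : ℝ) + N / k - 1) * vstar N k ε r ^ kstar N k * log (1 + r ^ 2 / ε ^ 2) ^ δ
      = chat N k ^ kstar N k * ε ^ ((N : ℝ) / k) *
          ∫ s in 0..T, bubbleProfile ((N : ℝ) * (k + 1) / (2 * k)) δ s := by
  set m : ℝ := (N : ℝ) * (k + 1) / (2 * k)
  have hexp : (N : ℝ) + N / k - 1 = 2 * m - 1 := by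
    have hk' : (k : ℝ) ≠ 0 := by exact_mod_cast hk.ne'
    simp only [m]
    field_simp
  calc ∫ r in Ioo 0 (ε * T),
        r ^ ((N : ℝ) + N / k - 1) * vstar N k ε r ^ kstar N k * log (1 + r ^ 2 / ε ^ 2) ^ δ
      = chat N k ^ kstar N k * ε ^ ((N : ℝ) / k) * ∫ r in 0..ε * T,
          r ^ (2 * m - 1) * (ε ^ 2 + r ^ 2) ^ (-m) * log (1 + r ^ 2 / ε ^ 2) ^ δ := by
        rw [intervalIntegral.integral_of_le (by positivity), integral_Ioc_eq_integral_Ioo,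
          ← integral_const_mul]
        congr 1
        funext r
        rw [hexp, vstar_rpow_kstar hk hN hε]
        ring
    _ = chat N k ^ kstar N k * ε ^ ((N : ℝ) / k) * ∫ s in 0..T, bubbleProfile m δ s := by
        rw [← mul_zero ε, ← intervalIntegral.smul_integral_comp_mul_left,
          intervalIntegral.integral_congr
            fun s hs => bubbleProfile_rescale hε (uIcc_of_le hT ▸ hs).1,
          intervalIntegral.integral_const_mul, smul_eq_mul, mul_inv_cancel_left₀ hε.ne',
          mul_zero]

end Instanton

/-- **Sharp instanton integral asymptotics, critical weight case `β = N/k`.**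
`[ε^{N/k} (-log ε)^{δ+1}]⁻¹ ∫_0^{ε^γ} r^{N+β-1} (v*_ε)^{k*} (log(1+r²/ε²))^δ dr
  → ĉ^{k*} (2(1-γ))^{δ+1} / (2(δ+1))` as `ε → 0⁺`. -/
theorem instanton_critical (N k : ℕ) (hk : 1 ≤ k) (hN : 2 * k < N)
    (δ γ : ℝ) (hδ : 0 ≤ δ) (hγ : γ ∈ Set.Ioo (0:ℝ) 1) :
    Filter.Tendsto
      (fun ε : ℝ => (ε ^ ((N : ℝ) / (k : ℝ)) * (-Real.log ε) ^ (δ + 1))⁻¹ *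
        ∫ r in Set.Ioo (0:ℝ) (ε ^ γ),
          r ^ ((N : ℝ) + (N : ℝ) / (k : ℝ) - 1) * vstar N k ε r ^ kstar N k *
            Real.log (1 + r ^ 2 / ε ^ 2) ^ δ)
      (nhdsWithin 0 (Set.Ioi 0))
      (nhds (chat N k ^ kstar N k * (2 * (1 - γ)) ^ (δ + 1) / (2 * (δ + 1)))) := by
  have hm : 2 ≤ (N : ℝ) * (k + 1) / (2 * k) := by
    have hk' : (1 : ℝ) ≤ k := by exact_mod_cast hk
    have hN' : (2 * k + 1 : ℝ) ≤ N := by exact_mod_cast hN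
    rw [le_div_iff₀ (by positivity)]
    nlinarith
  have hγ' : 0 < 1 - γ := sub_pos.2 hγ.2
  have hscale : Tendsto (fun ε : ℝ => ε ^ (γ - 1)) (𝓝[>] 0) atTop :=
    tendsto_rpow_neg_nhdsGT_zero (by linarith)
  have hlim := ((tendsto_integral_bubbleProfile_div_log_rpow hm hδ).comp hscale).const_mul
    (chat N k ^ kstar N k * (1 - γ) ^ (δ + 1))
  convert hlim.congr' ?_ using 2
  · rw [mul_rpow two_pos.le hγ'.le]
    ring
  filter_upwards [Ioo_mem_nhdsGT one_pos] with ε ⟨hε, hε1⟩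
  have hlog : 0 < -log ε := neg_pos.2 (log_neg hε hε1)
  rw [Function.comp_apply, show ε ^ γ = ε * ε ^ (γ - 1) by
      rw [mul_comm, ← rpow_add_one hε.ne', sub_add_cancel],
    integral_instanton_eq hk hN δ hε (by positivity), log_rpow hε,
    show (γ - 1) * log ε = (1 - γ) * -log ε by ring, mul_rpow hγ'.le hlog.le]
  field_simp
end
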